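/- arXiv:1612.00102 — 4 statements merged into one kernel-verified Lean document; each statement's English description precedes it below -/
import Mathlib

section
/- Let n ≥ 2 be an integer and let a₁, …, a_n be integers with a₁ + a₂ + ⋯ + a_n = a, where a ≤ C(n,2). Let X̂ = {A ∈ U_{n,n} : h_i(A) = −a_i for i = 1, 2, …, n−2} and Y = {B ∈ U_{(n−2),n} : h_i(B) = −a_i for i = 1, 2, …, n−2}. Then Σ_{A ∈ X̂} [ binom(C(n,2)−a, −a_{n−1}−h_{n−1}(A)) + binom(C(n,2)−a, −a_n−h_{n−1}(A)) ] = 2^{C(n,2)−a} · |Y|, where only finitely many terms of the left-hand sum are nonzero and Y is a finite set. -/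
open Finset

/-- `A` is an upper triangular matrix of nonnegative integers (rows `Fin n`, columns `Fin m`)
with prescribed diagonal entries `A_{i,i} = i − 1` (1-indexed), i.e. `A i i = i` (0-indexed). -/
def IsUmat {n m : ℕ} (A : Fin n → Fin m → ℕ) : Prop :=
  (∀ (i : Fin n) (j : Fin m), (j : ℕ) < (i : ℕ) → A i j = 0) ∧
  (∀ (i : Fin n) (j : Fin m), (i : ℕ) = (j : ℕ) → A i j = (i : ℕ))

/-- The `k`-th hook sum `h_k(A) = Σ_{i > k} A_{k,i} − Σ_{j ≤ k} A_{j,k}`. -/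
def hookSum {n m : ℕ} (A : Fin n → Fin m → ℕ) (k : Fin n) : ℤ :=
  (∑ i : Fin m, if (k : ℕ) < (i : ℕ) then (A k i : ℤ) else 0)
    - ∑ j : Fin n, ∑ c : Fin m,
        if (j : ℕ) ≤ (k : ℕ) ∧ (c : ℕ) = (k : ℕ) then (A j c : ℤ) else 0

/-- The binomial coefficient `binom N t` with integer indices, taken to be `0`
when `t < 0` (and `0` when `t > N`, as usual). -/
def zChoose (N t : ℤ) : ℕ := if 0 ≤ t then N.toNat.choose t.toNat else 0

/-!
Write `m = n - 2` and `M = C(n, 2) - a`. A matrix of `X̂` is a matrix `B ∈ Y` with the rows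
`(0, …, 0, m, t)` and `(0, …, 0, 0, m + 1)` appended; the first `m` hook sums only see the rows
of `B`, and the `m`-th one is `t - m - (column m of B)`. Summing over `t ≥ 0` turns each
`binom(M, e - t)` into the partial row sum `∑_{k ≤ e} binom(M, k)`. Since the hook sums of `B` add
up to the sum of its last two columns minus `C(m, 2)`, swapping these columns, an involution of
`Y`, sends the exponent `e` of the first binomial to `M - 1 - e` for the second one, and
`∑_{k ≤ e} binom(M, k) + ∑_{k ≤ M - 1 - e} binom(M, k) = 2^M`. The same block count, applied to
the first `K` rows, bounds the entries of `B ∈ Y`, so `Y` is finite.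
-/

def chooseSumLE (M : ℕ) (e : ℤ) : ℕ :=
  ∑ k ∈ range (M + 1), if (k : ℤ) ≤ e then M.choose k else 0

lemma zChoose_of_neg {N t : ℤ} (ht : t < 0) : zChoose N t = 0 := by
  simp [zChoose, not_le.2 ht]

lemma chooseSumLE_sub_one_add_zChoose (N e : ℤ) :
    chooseSumLE N.toNat (e - 1) + zChoose N e = chooseSumLE N.toNat e := by
  have hsplit : ∀ k : ℕ, (if (k : ℤ) ≤ e then N.toNat.choose k else 0) =
      (if (k : ℤ) ≤ e - 1 then N.toNat.choose k else 0) +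
        if (k : ℤ) = e then N.toNat.choose k else 0 := by
    intro k; split_ifs <;> omega
  rw [chooseSumLE, chooseSumLE, sum_congr rfl fun k _ => hsplit k, sum_add_distrib]
  congr 1
  rcases lt_or_ge e 0 with he | he
  · rw [zChoose_of_neg he]
    exact (sum_eq_zero fun k _ => if_neg (by omega)).symm
  · lift e to ℕ using he
    simp only [zChoose, Nat.cast_nonneg, if_true, Int.toNat_natCast, Nat.cast_inj,
      sum_ite_eq', mem_range]
    split_ifs with h
    · rfl
    · exact Nat.choose_eq_zero_of_lt (by omega)

lemma sum_range_zChoose_sub (N : ℤ) {K : ℕ} {e : ℤ} (he : e < K) :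
    ∑ t ∈ range K, zChoose N (e - t) = chooseSumLE N.toNat e := by
  induction K generalizing e with
  | zero => exact (sum_eq_zero fun k _ => if_neg (by push_cast at he; omega)).symm
  | succ K ih =>
    rw [sum_range_succ', ← chooseSumLE_sub_one_add_zChoose, ← ih (by push_cast at he; omega)]
    simp only [Nat.cast_add, Nat.cast_one, Nat.cast_zero, sub_zero, sub_add_eq_sub_sub_swap]

lemma chooseSumLE_add_chooseSumLE_sub (M : ℕ) (e : ℤ) :
    chooseSumLE M e + chooseSumLE M (M - 1 - e) = 2 ^ M := by
  rw [chooseSumLE, chooseSumLE, ← sum_range_reflect, ← sum_add_distrib, ← Nat.sum_range_choose]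
  refine sum_congr rfl fun k hk => ?_
  have hkM : k ≤ M := Nat.lt_succ_iff.1 (mem_range.1 hk)
  rw [Nat.add_sub_cancel, Nat.choose_symm hkM]
  split_ifs <;> omega

def zeroExtend {n N : ℕ} (A : Fin n → Fin N → ℕ) (j c : ℕ) : ℕ :=
  if h : j < n ∧ c < N then A ⟨j, h.1⟩ ⟨c, h.2⟩ else 0

lemma zeroExtend_of_lt {n N : ℕ} (A : Fin n → Fin N → ℕ) {j c : ℕ} (hj : j < n) (hc : c < N) :
    zeroExtend A j c = A ⟨j, hj⟩ ⟨c, hc⟩ :=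
  dif_pos ⟨hj, hc⟩

def natHook (N : ℕ) (b : ℕ → ℕ → ℕ) (k : ℕ) : ℤ :=
  ∑ c ∈ Ico (k + 1) N, (b k c : ℤ) - ∑ j ∈ range (k + 1), (b j k : ℤ)

lemma hookSum_eq_natHook {n N : ℕ} (A : Fin n → Fin N → ℕ) (k : Fin n) :
    hookSum A k = natHook N (zeroExtend A) k := by
  have hrow : Ico ((k : ℕ) + 1) N = (range N).filter fun c => (k : ℕ) < c := by
    ext c; simp only [mem_Ico, mem_filter, mem_range]; omega
  have hcol : range (k + 1) = (range n).filter fun j => j ≤ (k : ℕ) := by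
    ext j; simp only [mem_filter, mem_range]; omega
  rw [hookSum, natHook, hrow, hcol, sum_filter, sum_filter, ← Fin.sum_univ_eq_sum_range,
    ← Fin.sum_univ_eq_sum_range]
  congr 1
  · exact sum_congr rfl fun c _ => by rw [zeroExtend_of_lt A k.2 c.2]
  · refine sum_congr rfl fun j _ => ?_
    rcases lt_or_ge (k : ℕ) N with hk | hk
    · rw [sum_eq_single ⟨k, hk⟩ (fun c _ hc => if_neg fun h => hc (Fin.ext h.2))
        (by simp), zeroExtend_of_lt A j.2 hk]
      simp
    · simp [zeroExtend, hk.not_gt, show ∀ c : Fin N, (c : ℕ) ≠ k from fun c => by omega]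

lemma natHook_congr {N k : ℕ} {b b' : ℕ → ℕ → ℕ} (h : ∀ j ≤ k, ∀ c, b j c = b' j c) :
    natHook N b k = natHook N b' k := by
  rw [natHook, natHook]
  congr 1
  · exact sum_congr rfl fun c _ => by rw [h k le_rfl c]
  · exact sum_congr rfl fun j hj => by rw [h j (Nat.lt_succ_iff.1 (mem_range.1 hj))]

/-- `K.choose 2 = 0 + 1 + ⋯ + (K - 1)` is the contribution of the diagonal. -/
lemma sum_natHook {N K : ℕ} {b : ℕ → ℕ → ℕ} (hdiag : ∀ j < K, b j j = j) (hKN : K ≤ N) :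
    ∑ k ∈ range K, natHook N b k =
      ∑ j ∈ range K, ∑ c ∈ Ico K N, (b j c : ℤ) - K.choose 2 := by
  induction K with
  | zero => simp
  | succ K ih =>
    have hcol : ∀ j, ∑ c ∈ Ico K N, (b j c : ℤ) = b j K + ∑ c ∈ Ico (K + 1) N, (b j c : ℤ) :=
      fun j => sum_eq_sum_Ico_succ_bot (by omega) _
    rw [sum_range_succ, ih (fun j hj => hdiag j (by omega)) (by omega), natHook]
    simp only [sum_range_succ, hdiag K (by omega), Nat.choose_succ_succ', Nat.choose_one_right,
      hcol, sum_add_distrib]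
    push_cast
    ring

section UpperTriangular

variable {n N : ℕ}

lemma zeroExtend_diag {B : Fin n → Fin N → ℕ} (hB : IsUmat B) {j : ℕ} (hjn : j < n)
    (hjN : j < N) : zeroExtend B j j = j := by
  rw [zeroExtend_of_lt B hjn hjN, hB.2 _ _ rfl]

lemma sum_hookSum {B : Fin n → Fin (n + 2) → ℕ} (hB : IsUmat B) :
    ∑ k, hookSum B k =
      ∑ j, ((B j ⟨n, by omega⟩ : ℤ) + B j ⟨n + 1, by omega⟩) - n.choose 2 := by
  simp only [hookSum_eq_natHook]
  rw [Fin.sum_univ_eq_sum_range (natHook (n + 2) (zeroExtend B)),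
    sum_natHook (fun j hj => zeroExtend_diag hB hj (by omega)) (by omega),
    ← Fin.sum_univ_eq_sum_range (fun j => ∑ c ∈ Ico n (n + 2), (zeroExtend B j c : ℤ))]
  congr 1
  refine sum_congr rfl fun j _ => ?_
  rw [sum_Ico_succ_top (by omega), Nat.Ico_succ_singleton, sum_singleton,
    zeroExtend_of_lt B j.2 (by omega : n < n + 2),
    zeroExtend_of_lt B j.2 (by omega : n + 1 < n + 2)]

lemma le_sum_abs_hookSum {B : Fin n → Fin N → ℕ} (hB : IsUmat B) (j : Fin n) (c : Fin N) :
    (B j c : ℤ) ≤ ∑ k, |hookSum B k| + n.choose 2 + n := by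
  have hnonneg : 0 ≤ ∑ k, |hookSum B k| := sum_nonneg fun k _ => abs_nonneg _
  rcases lt_trichotomy (c : ℕ) j with hcj | hcj | hjc
  · rw [hB.1 j c hcj]; positivity
  · rw [hB.2 j c hcj.symm]; omega
  set K := min (c : ℕ) n
  have hK : ∑ k ∈ range K, natHook N (zeroExtend B) k + K.choose 2 =
      ∑ j ∈ range K, ∑ c ∈ Ico K N, (zeroExtend B j c : ℤ) := by
    rw [sum_natHook (fun j hj => zeroExtend_diag hB (by omega) (by omega)) (by omega)]
    ring
  have hentry : (B j c : ℤ) ≤ ∑ j ∈ range K, ∑ c ∈ Ico K N, (zeroExtend B j c : ℤ) := by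
    rw [← zeroExtend_of_lt B j.2 c.2]
    refine le_trans ?_ (single_le_sum (f := fun j => ∑ c ∈ Ico K N, (zeroExtend B j c : ℤ))
      (fun _ _ => sum_nonneg fun _ _ => by positivity) (mem_range.2 (by omega : (j : ℕ) < K)))
    exact single_le_sum (f := fun c => (zeroExtend B j c : ℤ)) (fun _ _ => by positivity)
      (mem_Ico.2 ⟨by omega, c.2⟩)
  have hhooks : ∑ k ∈ range K, natHook N (zeroExtend B) k ≤ ∑ k, |hookSum B k| := by
    calc ∑ k ∈ range K, natHook N (zeroExtend B) k
        ≤ ∑ k ∈ range n, |natHook N (zeroExtend B) k| :=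
          (sum_le_sum fun k _ => le_abs_self _).trans <| sum_le_sum_of_subset_of_nonneg
            (range_subset_range.2 (min_le_right _ _)) fun _ _ _ => abs_nonneg _
      _ = ∑ k, |hookSum B k| := by
          rw [← Fin.sum_univ_eq_sum_range (fun k => |natHook N (zeroExtend B) k|)]
          simp only [hookSum_eq_natHook]
  have hchoose : (K.choose 2 : ℤ) ≤ n.choose 2 := by
    exact_mod_cast Nat.choose_le_choose 2 (min_le_right _ _)
  omega

def umatWithHooks (N : ℕ) (h : Fin n → ℤ) : Set (Fin n → Fin N → ℕ) :=
  {B | IsUmat B ∧ ∀ k, hookSum B k = h k}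

lemma finite_umatWithHooks (h : Fin n → ℤ) : (umatWithHooks N h).Finite := by
  refine (Set.finite_Iic fun _ _ => (∑ k, |h k| + n.choose 2 + n).toNat).subset ?_
  rintro B ⟨hB, hhook⟩ j c
  change B j c ≤ (∑ k, |h k| + n.choose 2 + n).toNat
  have := le_sum_abs_hookSum hB j c
  simp only [hhook] at this
  omega

lemma IsUmat.castAdd {m d : ℕ} {A : Fin (m + d) → Fin N → ℕ} (hA : IsUmat A) :
    IsUmat fun j : Fin m => A (Fin.castAdd d j) :=
  ⟨fun _ j h => hA.1 _ j h, fun _ j h => hA.2 _ j h⟩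

lemma IsUmat.comp_perm {A : Fin n → Fin N → ℕ} (hA : IsUmat A) {σ : Equiv.Perm (Fin N)}
    (hσ : ∀ c : Fin N, (c : ℕ) < n → σ c = c) : IsUmat fun j c => A j (σ c) :=
  ⟨fun i j h => by show A i (σ j) = 0; rw [hσ j (by omega)]; exact hA.1 i j h,
    fun i j h => by show A i (σ j) = i; rw [hσ j (by omega)]; exact hA.2 i j h⟩

/-- A column permutation fixing the columns `≤ k` maps columns `> k` to columns `> k`. -/
lemma hookSum_comp_perm (A : Fin n → Fin N → ℕ) {σ : Equiv.Perm (Fin N)} {k : Fin n}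
    (hσ : ∀ c : Fin N, (c : ℕ) ≤ k → σ c = c) :
    hookSum (fun j c => A j (σ c)) k = hookSum A k := by
  have hlt : ∀ c, (k : ℕ) < σ c ↔ (k : ℕ) < c := fun c => by
    constructor <;> intro h <;> by_contra h'
    · rw [hσ c (not_lt.1 h')] at h; omega
    · rw [σ.injective (hσ (σ c) (not_lt.1 h'))] at h'; omega
  rw [hookSum, hookSum, ← Equiv.sum_comp σ (fun c => if (k : ℕ) < c then (A k c : ℤ) else 0)]
  simp only [hlt]
  congr 1
  refine sum_congr rfl fun j _ => sum_congr rfl fun c _ => ?_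
  split_ifs with h
  · rw [hσ c h.2.le]
  · rfl

end UpperTriangular

lemma finsum_mem_image_prod_eq_sum {α β M : Type*} [AddCommMonoid M] {φ : β × ℕ → α}
    (hφ : Function.Injective φ) (s : Finset β) {K : ℕ} {f : α → M}
    (hf : ∀ b ∈ s, ∀ t, K ≤ t → f (φ (b, t)) = 0) :
    ∑ᶠ x ∈ φ '' ((s : Set β) ×ˢ Set.univ), f x = ∑ b ∈ s, ∑ t ∈ range K, f (φ (b, t)) := by
  rw [finsum_mem_image hφ.injOn, ← sum_product (f := fun p => f (φ p))]
  refine finsum_mem_eq_sum_of_inter_support_eq _ (Set.ext fun ⟨b, t⟩ => ?_)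
  simp only [Set.mem_inter_iff, Set.mem_prod, Finset.mem_coe, Set.mem_univ, and_true,
    Function.mem_support, coe_product, coe_range, Set.mem_Iio]
  exact ⟨fun ⟨hb, hne⟩ => ⟨⟨hb, not_le.1 fun ht => hne (hf b hb t ht)⟩, hne⟩,
    fun ⟨⟨hb, _⟩, hne⟩ => ⟨hb, hne⟩⟩

section LastTwoRows

variable {m : ℕ}

/-- Appends to an `m × (m + 2)` matrix the rows `(0, …, 0, m, t)` and `(0, …, 0, 0, m + 1)`. -/
def extendRows (B : Fin m → Fin (m + 2) → ℕ) (t : ℕ) : Fin (m + 2) → Fin (m + 2) → ℕ :=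
  fun i c => if h : (i : ℕ) < m then B ⟨i, h⟩ c
    else if (c : ℕ) = i then i else if (i : ℕ) = m ∧ (c : ℕ) = m + 1 then t else 0

lemma extendRows_castAdd (B : Fin m → Fin (m + 2) → ℕ) (t : ℕ) (j : Fin m) :
    extendRows B t (Fin.castAdd 2 j) = B j := by
  funext c
  simp [extendRows]

lemma extendRows_apply_last (B : Fin m → Fin (m + 2) → ℕ) (t : ℕ) :
    extendRows B t ⟨m, by omega⟩ ⟨m + 1, by omega⟩ = t := by
  simp [extendRows]

lemma extendRows_injective :
    Function.Injective fun p : (Fin m → Fin (m + 2) → ℕ) × ℕ => extendRows p.1 p.2 := by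
  rintro ⟨B, t⟩ ⟨B', t'⟩ (h : extendRows B t = extendRows B' t')
  rw [Prod.mk.injEq, ← extendRows_apply_last B t, ← extendRows_apply_last B' t', h]
  exact ⟨funext fun j => by rw [← extendRows_castAdd B t, ← extendRows_castAdd B' t', h], rfl⟩

lemma IsUmat.extendRows {B : Fin m → Fin (m + 2) → ℕ} (hB : IsUmat B) (t : ℕ) :
    IsUmat (extendRows B t) := by
  refine ⟨fun i c h => ?_, fun i c h => ?_⟩ <;> unfold _root_.extendRows
  · split_ifs with hi <;> first | exact hB.1 _ _ h | omega
  · split_ifs with hi <;> first | exact hB.2 _ _ h | omega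

lemma extendRows_restrict {A : Fin (m + 2) → Fin (m + 2) → ℕ} (hA : IsUmat A) :
    extendRows (fun j => A (Fin.castAdd 2 j)) (A ⟨m, by omega⟩ ⟨m + 1, by omega⟩) = A := by
  funext i c
  unfold extendRows
  split_ifs with hi hc hlast
  · rfl
  · exact (hA.2 i c hc.symm).symm
  · rw [show i = ⟨m, by omega⟩ from Fin.ext hlast.1,
      show c = ⟨m + 1, by omega⟩ from Fin.ext hlast.2]
  · exact (hA.1 i c (by omega)).symm

lemma zeroExtend_extendRows (B : Fin m → Fin (m + 2) → ℕ) (t : ℕ) {j : ℕ} (hj : j < m)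
    (c : ℕ) : zeroExtend (extendRows B t) j c = zeroExtend B j c := by
  simp [zeroExtend, extendRows, hj, show j < m + 2 by omega]

lemma hookSum_extendRows_castAdd (B : Fin m → Fin (m + 2) → ℕ) (t : ℕ) (k : Fin m) :
    hookSum (extendRows B t) (Fin.castAdd 2 k) = hookSum B k := by
  rw [hookSum_eq_natHook, hookSum_eq_natHook]
  exact natHook_congr fun j hj c => zeroExtend_extendRows B t (by simp at hj; omega) c

lemma hookSum_extendRows_self (B : Fin m → Fin (m + 2) → ℕ) (t : ℕ) :
    hookSum (extendRows B t) ⟨m, by omega⟩ = t - m - ∑ j, (B j ⟨m, by omega⟩ : ℤ) := by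
  rw [hookSum_eq_natHook, natHook, Nat.Ico_succ_singleton, sum_singleton, sum_range_succ,
    ← Fin.sum_univ_eq_sum_range (fun j => (zeroExtend (extendRows B t) j m : ℤ)),
    sum_congr rfl fun j _ => by
      rw [zeroExtend_extendRows B t j.2, zeroExtend_of_lt B j.2 (by omega : m < m + 2)],
    zeroExtend_of_lt _ (by omega) (by omega : m + 1 < m + 2),
    zeroExtend_of_lt _ (by omega) (by omega : m < m + 2)]
  simp only [extendRows, lt_self_iff_false, ↓reduceDIte, Nat.add_eq_left, one_ne_zero,
    ↓reduceIte, Nat.add_left_cancel_iff, and_self, Fin.eta]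
  ring

lemma image_extendRows (g : Fin (m + 2) → ℤ) :
    (fun p => extendRows p.1 p.2) '' (umatWithHooks (m + 2) (fun i => g (Fin.castAdd 2 i)) ×ˢ
        Set.univ) =
      {A | IsUmat A ∧ ∀ i : Fin (m + 2), (i : ℕ) < m → hookSum A i = g i} := by
  ext A
  constructor
  · rintro ⟨⟨B, t⟩, ⟨⟨hB, hhook⟩, -⟩, rfl⟩
    refine ⟨hB.extendRows t, fun i hi => ?_⟩
    rw [show i = Fin.castAdd 2 ⟨i, hi⟩ from Fin.ext rfl, hookSum_extendRows_castAdd, hhook]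
  · rintro ⟨hA, hhook⟩
    refine ⟨⟨fun j => A (Fin.castAdd 2 j), A ⟨m, by omega⟩ ⟨m + 1, by omega⟩⟩,
      ⟨⟨hA.castAdd, fun i => ?_⟩, trivial⟩, extendRows_restrict hA⟩
    rw [← hookSum_extendRows_castAdd _ (A ⟨m, by omega⟩ ⟨m + 1, by omega⟩),
      extendRows_restrict hA, hhook _ i.2]

def swapLastCols (B : Fin m → Fin (m + 2) → ℕ) : Fin m → Fin (m + 2) → ℕ :=
  fun j c => B j (Equiv.swap ⟨m, by omega⟩ ⟨m + 1, by omega⟩ c)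

lemma swapLastCols_involutive : Function.Involutive (swapLastCols (m := m)) := fun B => by
  funext j c
  simp [swapLastCols]

lemma swap_last_two_apply_of_lt {c : Fin (m + 2)} (hc : (c : ℕ) < m) :
    Equiv.swap ⟨m, by omega⟩ ⟨m + 1, by omega⟩ c = c :=
  Equiv.swap_apply_of_ne_of_ne (fun h => by simp [h] at hc) (fun h => by simp [h] at hc)

lemma swapLastCols_mem_umatWithHooks {h : Fin m → ℤ} {B : Fin m → Fin (m + 2) → ℕ}
    (hB : B ∈ umatWithHooks (m + 2) h) : swapLastCols B ∈ umatWithHooks (m + 2) h :=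
  ⟨hB.1.comp_perm fun _ hc => swap_last_two_apply_of_lt hc, fun i => by
    unfold swapLastCols
    rw [hookSum_comp_perm B fun _ hc => swap_last_two_apply_of_lt (by omega), hB.2 i]⟩

def hookOffset (a : Fin (m + 2) → ℤ) (c : Fin (m + 2)) (B : Fin m → Fin (m + 2) → ℕ) : ℤ :=
  -a c + m + ∑ j, (B j ⟨m, by omega⟩ : ℤ)

lemma neg_sub_hookSum_extendRows (a : Fin (m + 2) → ℤ) (c : Fin (m + 2))
    (B : Fin m → Fin (m + 2) → ℕ) (t : ℕ) :
    -a c - hookSum (extendRows B t) ⟨m, by omega⟩ = hookOffset a c B - t := by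
  rw [hookSum_extendRows_self, hookOffset]
  ring

lemma hookOffset_add_hookOffset_swapLastCols (a : Fin (m + 2) → ℤ) {B : Fin m → Fin (m + 2) → ℕ}
    (hB : B ∈ umatWithHooks (m + 2) fun i => -a (Fin.castAdd 2 i)) :
    hookOffset a ⟨m, by omega⟩ B + hookOffset a ⟨m + 1, by omega⟩ (swapLastCols B) =
      (m + 2).choose 2 - ∑ i, a i - 1 := by
  have hcols := sum_hookSum hB.1
  simp only [hB.2] at hcols
  have hswap : ∀ j, swapLastCols B j ⟨m, by omega⟩ = B j ⟨m + 1, by omega⟩ := fun j =>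
    congrArg (B j) (Equiv.swap_apply_left _ _)
  have hchoose : (m + 2).choose 2 = m.choose 2 + 2 * m + 1 := by
    simp only [Nat.choose_succ_succ, Nat.choose_one_right, Nat.choose_zero_right]
    ring
  have hlast : Fin.natAdd m (0 : Fin 2) = ⟨m, by omega⟩ ∧
      Fin.natAdd m (1 : Fin 2) = ⟨m + 1, by omega⟩ := ⟨rfl, rfl⟩
  simp only [hookOffset, hswap, Fin.sum_univ_add, Fin.sum_univ_two, sum_neg_distrib, hlast,
    sum_add_distrib] at hcols ⊢
  push_cast [hchoose]
  linarith

lemma sum_chooseSumLE_hookOffset (a : Fin (m + 2) → ℤ)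
    (hle : ∑ i, a i ≤ ((m + 2).choose 2 : ℤ)) {S : Finset (Fin m → Fin (m + 2) → ℕ)}
    (hS : ∀ B, B ∈ S ↔ B ∈ umatWithHooks (m + 2) fun i => -a (Fin.castAdd 2 i)) :
    ∑ B ∈ S, (chooseSumLE (((m + 2).choose 2 : ℤ) - ∑ i, a i).toNat
        (hookOffset a ⟨m, by omega⟩ B) +
      chooseSumLE (((m + 2).choose 2 : ℤ) - ∑ i, a i).toNat
        (hookOffset a ⟨m + 1, by omega⟩ B)) =
      2 ^ (((m + 2).choose 2 : ℤ) - ∑ i, a i).toNat * S.card := by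
  set M := (((m + 2).choose 2 : ℤ) - ∑ i, a i).toNat
  have hM : (M : ℤ) = (m + 2).choose 2 - ∑ i, a i := Int.toNat_of_nonneg (by omega)
  have hmem : ∀ B ∈ S, swapLastCols B ∈ S := fun B hB =>
    (hS _).2 (swapLastCols_mem_umatWithHooks ((hS B).1 hB))
  have hswap : ∑ B ∈ S, chooseSumLE M (hookOffset a ⟨m + 1, by omega⟩ B) =
      ∑ B ∈ S, chooseSumLE M (M - 1 - hookOffset a ⟨m, by omega⟩ B) := by
    refine sum_nbij' swapLastCols swapLastCols hmem hmem
      (fun B _ => swapLastCols_involutive B) (fun B _ => swapLastCols_involutive B)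
      fun B hB => ?_
    have := hookOffset_add_hookOffset_swapLastCols a ((hS _).1 (hmem B hB))
    rw [swapLastCols_involutive] at this
    congr 1
    omega
  rw [sum_add_distrib, hswap, ← sum_add_distrib,
    sum_congr rfl fun B _ => chooseSumLE_add_chooseSumLE_sub M _, sum_const, smul_eq_mul, mul_comm]

theorem finsum_zChoose_hookSum_eq (a : Fin (m + 2) → ℤ)
    (hle : ∑ i, a i ≤ ((m + 2).choose 2 : ℤ)) :
    (∑ᶠ A ∈ {A : Fin (m + 2) → Fin (m + 2) → ℕ |
        IsUmat A ∧ ∀ i : Fin (m + 2), (i : ℕ) < m → hookSum A i = -a i},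
      (zChoose ((m + 2).choose 2 - ∑ i, a i) (-a ⟨m, by omega⟩ - hookSum A ⟨m, by omega⟩)
        + zChoose ((m + 2).choose 2 - ∑ i, a i)
          (-a ⟨m + 1, by omega⟩ - hookSum A ⟨m, by omega⟩)))
      = 2 ^ (((m + 2).choose 2 : ℤ) - ∑ i, a i).toNat *
        (umatWithHooks (m + 2) fun i => -a (Fin.castAdd 2 i)).ncard := by
  have hY := finite_umatWithHooks (N := m + 2) fun i => -a (Fin.castAdd 2 i)
  obtain ⟨K, hK⟩ : ∃ K : ℕ, ∀ B ∈ hY.toFinset,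
      hookOffset a ⟨m, by omega⟩ B < K ∧ hookOffset a ⟨m + 1, by omega⟩ B < K := by
    obtain ⟨K, hK⟩ := (hY.image fun B =>
      max (hookOffset a ⟨m, by omega⟩ B) (hookOffset a ⟨m + 1, by omega⟩ B)).bddAbove
    refine ⟨K.toNat + 1, fun B hB => ?_⟩
    have := hK ⟨B, hY.mem_toFinset.1 hB, rfl⟩
    simp only [max_le_iff] at this
    omega
  rw [← image_extendRows, ← hY.coe_toFinset, Set.ncard_coe_finset,
    finsum_mem_image_prod_eq_sum extendRows_injective _ (K := K) fun B hB t ht => ?vanish,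
    ← sum_chooseSumLE_hookOffset a hle fun B => hY.mem_toFinset]
  · refine sum_congr rfl fun B hB => ?_
    simp only [neg_sub_hookSum_extendRows, sum_add_distrib,
      sum_range_zChoose_sub _ (hK B hB).1, sum_range_zChoose_sub _ (hK B hB).2]
  · have := hK B hB
    simp only [neg_sub_hookSum_extendRows]
    rw [zChoose_of_neg (by omega), zChoose_of_neg (by omega), add_zero]

end LastTwoRows

/-- Lemma 3.4 of the paper: with `a₁ + ⋯ + a_n = a ≤ C(n,2)`,
`Σ_{A ∈ X̂} [binom(C(n,2)−a, −a_{n−1}−h_{n−1}(A)) + binom(C(n,2)−a, −a_n−h_{n−1}(A))]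
  = 2^{C(n,2)−a} ⬝ |Y|`,
where `X̂ = {A ∈ U_{n,n} : h_i(A) = −a_i, i = 1,…,n−2}` and
`Y = {B ∈ U_{n−2,n} : h_i(B) = −a_i, i = 1,…,n−2}`. -/
theorem stmt2 (n : ℕ) (hn : 2 ≤ n) (a : Fin n → ℤ) (asum : ℤ)
    (ha : ∑ i, a i = asum) (hle : asum ≤ (n.choose 2 : ℤ)) :
    (∑ᶠ A ∈ {A : Fin n → Fin n → ℕ |
        IsUmat A ∧ ∀ i : Fin n, (i : ℕ) < n - 2 → hookSum A i = -a i},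
      (zChoose ((n.choose 2 : ℤ) - asum)
          (-a ⟨n - 2, by omega⟩ - hookSum A ⟨n - 2, by omega⟩)
        + zChoose ((n.choose 2 : ℤ) - asum)
          (-a ⟨n - 1, by omega⟩ - hookSum A ⟨n - 2, by omega⟩)))
      = 2 ^ (((n.choose 2 : ℤ) - asum).toNat) *
        {B : Fin (n - 2) → Fin n → ℕ |
          IsUmat B ∧ ∀ i : Fin (n - 2), hookSum B i = -a ⟨(i : ℕ), by omega⟩}.ncard := by
  obtain ⟨m, rfl⟩ : ∃ m, n = m + 2 := ⟨n - 2, by omega⟩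
  subst ha
  exact finsum_zChoose_hookSum_eq a hle
end

section
/- Let a = (a₁,…,a_n) ∈ ℕⁿ and let S = {i ∈ [n] : a_i > 0}. Then the number of a-Tesler tableaux of dimension 0 equals the number of pairs (V, f) where S ⊆ V ⊆ [n], f : V → V satisfies f(v) ≥ v for all v ∈ V, and every u ∈ V such that (f(v) = u implies v = u) belongs to S. (Such pairs (V,f) encode exactly the decreasing forests on V whose leaves are all contained in S: f(v) is the parent of v when f(v) > v, v is a root when f(v) = v, and a leaf is a vertex with no child.) -/
open Finset

/-- An `a`-Tesler tableau: a `{0,1}`-filling `T` of the shifted staircase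
`{(i,j) : i ≤ j}` (encoded as a full matrix that is `false` below the diagonal)
such that (1) if `a i > 0` then row `i` is nonzero; (2) if `T i j = 1` with `i < j`
then row `j` is nonzero; (3) if `a j = 0` and column `j` is zero above the diagonal,
then row `j` is zero. -/
def IsTesler {n : ℕ} (a : Fin n → ℕ) (T : Fin n → Fin n → Bool) : Prop :=
  (∀ i j : Fin n, j < i → T i j = false) ∧
  (∀ i : Fin n, 0 < a i → ∃ j, i ≤ j ∧ T i j = true) ∧
  (∀ i j : Fin n, i < j → T i j = true → ∃ k, j ≤ k ∧ T j k = true) ∧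
  (∀ j : Fin n, a j = 0 → (∀ i, i < j → T i j = false) →
    ∀ k, j ≤ k → T j k = false)

/-- A Tesler tableau has dimension `0` iff its total number of `1`'s equals its
number of nonzero rows. -/
def TeslerDimZero {n : ℕ} (T : Fin n → Fin n → Bool) : Prop :=
  (Finset.univ.filter fun p : Fin n × Fin n => T p.1 p.2 = true).card
    = (Finset.univ.filter fun i : Fin n => ∃ j, T i j = true).card

/-!
Counting `1`'s row by row, a tableau has at least as many `1`'s as nonzero rows, with equality
iff no row has two `1`'s. So a tableau of dimension `0` is the graph of a map `f` defined on its
set `V` of nonzero rows, and `f v ≥ v` because the tableau vanishes below the diagonal.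
Read through `f`, Tesler condition (1) says `S ⊆ V`, condition (2) says `f` maps `V` into `V`,
and condition (3) says that every `u ∈ V` without a child other than itself lies in `S`.
-/

section RowCount

variable {α β : Type*} [Fintype α] [Fintype β]

theorem card_filter_eq_sum_card_row (T : α → β → Bool) :
    #{p : α × β | T p.1 p.2} = ∑ i, #{j | T i j} := by
  simp only [card_filter, Fintype.sum_prod_type]

theorem card_filter_eq_card_nonzero_rows_iff (T : α → β → Bool) :
    #{p : α × β | T p.1 p.2} = #{i | ∃ j, T i j} ↔ ∀ i j k, T i j → T i k → j = k := by
  have row_le : ∀ i ∈ univ, (if ∃ j, T i j then 1 else 0) ≤ #{j | T i j} := by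
    intro i _
    split_ifs with h
    · obtain ⟨j, hj⟩ := h
      exact card_pos.mpr ⟨j, by simpa using hj⟩
    · exact Nat.zero_le _
  rw [card_filter_eq_sum_card_row, card_filter (fun i => ∃ j, T i j), eq_comm,
    sum_eq_sum_iff_of_le row_le]
  refine forall_congr' fun i => ?_
  simp only [mem_univ, true_implies]
  split_ifs with h
  · obtain ⟨j, hj⟩ := h
    have hpos : 0 < #{j | T i j} := card_pos.mpr ⟨j, by simpa using hj⟩
    rw [show 1 = #{j | T i j} ↔ #{j | T i j} ≤ 1 by omega, card_le_one]
    simp only [mem_filter, mem_univ, true_and]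
    exact ⟨fun h j k hj hk => h j hj k hk, fun h j hj k hk => h j k hj hk⟩
  · simp_all

end RowCount

section GraphTableau

variable {α β : Type*} [DecidableEq α] [DecidableEq β]

def graphTableau (V : Finset α) (f : α → β) : α → β → Bool :=
  fun i j => decide (i ∈ V ∧ f i = j)

variable {V : Finset α} {f : α → β}

@[simp]
theorem graphTableau_eq_true {i : α} {j : β} : graphTableau V f i j = true ↔ i ∈ V ∧ f i = j :=
  decide_eq_true_iff

theorem graphTableau_row_unique (i : α) (j k : β) :
    graphTableau V f i j → graphTableau V f i k → j = k := by
  simp only [graphTableau_eq_true]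
  rintro ⟨-, rfl⟩ ⟨-, rfl⟩
  rfl

theorem exists_graphTableau_eq_true_iff (i : α) : (∃ j, graphTableau V f i j) ↔ i ∈ V := by
  simp

theorem eq_of_graphTableau_eq {V₁ V₂ : Finset α} {f₁ f₂ : α → α}
    (hf₁ : ∀ v ∉ V₁, f₁ v = v) (hf₂ : ∀ v ∉ V₂, f₂ v = v)
    (h : graphTableau V₁ f₁ = graphTableau V₂ f₂) : V₁ = V₂ ∧ f₁ = f₂ := by
  have hV : V₁ = V₂ := by
    ext i
    rw [← exists_graphTableau_eq_true_iff (f := f₁), ← exists_graphTableau_eq_true_iff (f := f₂),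
      h]
  subst hV
  refine ⟨rfl, funext fun i => ?_⟩
  by_cases hi : i ∈ V₁
  · have := congrFun (congrFun h i) (f₁ i)
    simp only [graphTableau, hi, true_and, decide_true] at this
    exact (of_decide_eq_true this.symm).symm
  · rw [hf₁ i hi, hf₂ i hi]

end GraphTableau

section RowFunction

variable {α : Type*} [Fintype α]

def rowSupport (T : α → α → Bool) : Finset α := {i | ∃ j, T i j}

noncomputable def rowFun (T : α → α → Bool) (i : α) : α :=
  if h : ∃ j, T i j then h.choose else i

theorem rowFun_of_notMem_rowSupport {T : α → α → Bool} {i : α} (hi : i ∉ rowSupport T) :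
    rowFun T i = i :=
  dif_neg (by simpa [rowSupport] using hi)

theorem graphTableau_rowSupport_rowFun [DecidableEq α] {T : α → α → Bool}
    (hT : ∀ i j k, T i j → T i k → j = k) : graphTableau (rowSupport T) (rowFun T) = T := by
  funext i j
  by_cases hrow : ∃ j, T i j
  · have hfi : T i (rowFun T i) := by
      rw [rowFun, dif_pos hrow]
      exact hrow.choose_spec
    rw [Bool.eq_iff_iff, graphTableau_eq_true]
    exact ⟨fun ⟨_, hj⟩ => hj ▸ hfi, fun hj => ⟨by simpa [rowSupport] using hrow, hT i _ _ hfi hj⟩⟩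
  · push Not at hrow
    simp [graphTableau, rowSupport, hrow]

end RowFunction

theorem isTesler_graphTableau_iff {n : ℕ} {a : Fin n → ℕ} {V : Finset (Fin n)}
    {f : Fin n → Fin n} :
    IsTesler a (graphTableau V f) ↔
      (∀ i, 0 < a i → i ∈ V) ∧ (∀ v ∈ V, f v ∈ V ∧ v ≤ f v) ∧
        (∀ u ∈ V, (∀ v ∈ V, f v = u → v = u) → 0 < a u) := by
  simp only [IsTesler, graphTableau, decide_eq_true_eq, decide_eq_false_iff_not]
  constructor
  · rintro ⟨hdiag, hsupp, hcol, hempty⟩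
    have hle : ∀ v ∈ V, v ≤ f v := fun v hv => not_lt.mp fun hlt => hdiag v (f v) hlt ⟨hv, rfl⟩
    refine ⟨fun i hi => (hsupp i hi).choose_spec.2.1, fun v hv => ⟨?_, hle v hv⟩, ?_⟩
    · rcases (hle v hv).eq_or_lt with heq | hlt
      · rwa [← heq]
      · exact (hcol v (f v) hlt ⟨hv, rfl⟩).choose_spec.2.1
    · intro u hu hleaf
      by_contra ha
      exact hempty u (by omega) (fun i hiu hi => hiu.ne (hleaf i hi.1 hi.2)) (f u) (hle u hu)
        ⟨hu, rfl⟩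
  · rintro ⟨hsupp, hmaps, hleaf⟩
    refine ⟨fun i j hji hi => ?_, fun i hi => ⟨f i, (hmaps i (hsupp i hi)).2, hsupp i hi, rfl⟩,
      fun i j _ hi => ?_, fun j ha hcol k _ hj => ?_⟩
    · exact hji.not_ge (hi.2 ▸ (hmaps i hi.1).2)
    · have hjV : j ∈ V := hi.2 ▸ (hmaps i hi.1).1
      exact ⟨f j, (hmaps j hjV).2, hjV, rfl⟩
    · refine (hleaf j hj.1 fun v hv hvj => ?_).ne' ha
      by_contra hne
      exact hcol v (lt_of_le_of_ne (hvj ▸ (hmaps v hv).2) hne) ⟨hv, hvj⟩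

theorem teslerDimZero_iff {n : ℕ} (T : Fin n → Fin n → Bool) :
    TeslerDimZero T ↔ ∀ i j k, T i j → T i k → j = k := by
  rw [TeslerDimZero]
  -- the two sides differ only in their `Decidable` instances
  convert card_filter_eq_card_nonzero_rows_iff T

/-- The number of `a`-Tesler tableaux of dimension `0` equals the number of
decreasing forests on a vertex set `V` with `S ⊆ V ⊆ [n]` whose leaves all lie in
`S = {i : a i > 0}`; such forests are encoded as pairs `(V, f)` with `f : V → V`,
`f v ≥ v` (`f v` is the parent of `v`, and `v` is a root when `f v = v`), extended
by the identity outside `V`. -/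
theorem stmt6 (n : ℕ) (a : Fin n → ℕ) :
    Nat.card {T : Fin n → Fin n → Bool // IsTesler a T ∧ TeslerDimZero T}
      = Nat.card {p : Finset (Fin n) × (Fin n → Fin n) //
          (∀ i, 0 < a i → i ∈ p.1) ∧
          (∀ v ∈ p.1, p.2 v ∈ p.1 ∧ v ≤ p.2 v) ∧
          (∀ v, v ∉ p.1 → p.2 v = v) ∧
          (∀ u ∈ p.1, (∀ v ∈ p.1, p.2 v = u → v = u) → 0 < a u)} := by
  symm
  refine Nat.card_eq_of_bijective (fun p => ⟨graphTableau p.1.1 p.1.2,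
    isTesler_graphTableau_iff.mpr ⟨p.2.1, p.2.2.1, p.2.2.2.2⟩,
    (teslerDimZero_iff _).mpr graphTableau_row_unique⟩) ⟨?_, ?_⟩
  · rintro ⟨⟨V, f⟩, hVf⟩ ⟨⟨V', f'⟩, hVf'⟩ h
    obtain ⟨rfl, rfl⟩ := eq_of_graphTableau_eq hVf.2.2.1 hVf'.2.2.1 (congrArg Subtype.val h)
    rfl
  · rintro ⟨T, hT, hdim⟩
    have hgraph := graphTableau_rowSupport_rowFun ((teslerDimZero_iff T).mp hdim)
    obtain ⟨hsupp, hmaps, hleaf⟩ := isTesler_graphTableau_iff.mp (hgraph ▸ hT)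
    exact ⟨⟨(rowSupport T, rowFun T), hsupp, hmaps, fun _ => rowFun_of_notMem_rowSupport, hleaf⟩,
      Subtype.ext hgraph⟩
end

section
/- Let r, s ≥ 0 be integers, n = r + s + 2, and let a ∈ ℝ^{n+1} be the vector (1, 0, …, 0, 1, 0, …, 0, −2) with a₁ = 1, a_{r+2} = 1, a_{n+1} = −2 and all other entries 0. Then the set of extreme points of the flow polytope F_{K_{n+1}}(a) has exactly 2^{r+1} · 3^{s} elements. -/
open Finset

/-- The edge set of the complete graph `K_{n+1}`: pairs `(i,j)` with `i < j`. -/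
abbrev FlowEdge (n : ℕ) := {p : Fin (n + 1) × Fin (n + 1) // p.1 < p.2}

/-- The flow polytope `F_{K_{n+1}}(a)` of the complete graph `K_{n+1}` with netflow
vector `a`: nonnegative functions on the edge set such that at every vertex `k`,
(outgoing flow) − (incoming flow) = `a k`. -/
def flowPolytope (n : ℕ) (a : Fin (n + 1) → ℝ) : Set (FlowEdge n → ℝ) :=
  {f | (∀ e, 0 ≤ f e) ∧
    ∀ k : Fin (n + 1),
      (∑ e : FlowEdge n, if e.1.1 = k then f e else 0)
        - (∑ e : FlowEdge n, if e.1.2 = k then f e else 0) = a k}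

/-!
The netflow vector is nonnegative away from the sink, so a flow in the polytope is a vertex exactly
when at most one edge of positive flow leaves each vertex. Two such edges at one vertex, each
continued along positive edges to the sink, differ by a circulation inside the support along which
the flow can be moved both ways; conversely, going up the vertex order, a flow of this shape is the
only flow with the same netflow supported on its support.

For `a = e₁ + e_{r+2} - 2 e_{n+1}` such a flow is the sum of the unit flows along two increasing
paths to the sink, from `1` and from `r+2`, that coincide from their first common vertex `m` on. The
pairs of vertex sets are counted by `m`: each of the `r` vertices before `r+2` is on the first path
or not, each vertex strictly between `r+2` and `m` is on the first path, the second, or neither, and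
each vertex strictly between `m` and the sink is on both or neither. Summing over `m` gives
`2^r (2^s + ∑_{j=1}^{s} 3^(j-1) 2^(s-j) + 3^s) = 2^(r+1) 3^s`.
-/

namespace FlowPolytope

variable {n : ℕ}

def outflow : (FlowEdge n → ℝ) →ₗ[ℝ] Fin (n + 1) → ℝ where
  toFun f k := ∑ e : FlowEdge n, if e.1.1 = k then f e else 0
  map_add' f g := by ext k; simp only [Pi.add_apply, ← sum_add_distrib, ite_add_ite, add_zero]
  map_smul' c f := by ext k; simp [mul_sum]

def inflow : (FlowEdge n → ℝ) →ₗ[ℝ] Fin (n + 1) → ℝ where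
  toFun f k := ∑ e : FlowEdge n, if e.1.2 = k then f e else 0
  map_add' f g := by ext k; simp only [Pi.add_apply, ← sum_add_distrib, ite_add_ite, add_zero]
  map_smul' c f := by ext k; simp [mul_sum]

def netflow : (FlowEdge n → ℝ) →ₗ[ℝ] Fin (n + 1) → ℝ := outflow - inflow

lemma outflow_apply (f : FlowEdge n → ℝ) (k : Fin (n + 1)) :
    outflow f k = ∑ e : FlowEdge n, if e.1.1 = k then f e else 0 := rfl

lemma inflow_apply (f : FlowEdge n → ℝ) (k : Fin (n + 1)) :
    inflow f k = ∑ e : FlowEdge n, if e.1.2 = k then f e else 0 := rfl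

lemma netflow_apply (f : FlowEdge n → ℝ) (k : Fin (n + 1)) :
    netflow f k = outflow f k - inflow f k := rfl

lemma mem_flowPolytope {a : Fin (n + 1) → ℝ} {f : FlowEdge n → ℝ} :
    f ∈ flowPolytope n a ↔ (∀ e, 0 ≤ f e) ∧ netflow f = a := by
  simp [flowPolytope, funext_iff, netflow_apply, outflow_apply, inflow_apply]

lemma netflow_single (e : FlowEdge n) :
    netflow (Pi.single e 1) = Pi.single e.1.1 1 - Pi.single e.1.2 1 := by
  ext k
  simp only [netflow_apply, outflow_apply, inflow_apply]
  rw [sum_eq_single e (by simp +contextual) (by simp),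
    sum_eq_single e (by simp +contextual) (by simp)]
  simp [Pi.single_apply, eq_comm]

lemma inflow_zero (f : FlowEdge n → ℝ) : inflow f 0 = 0 :=
  sum_eq_zero fun e _ => if_neg (e.2.trans_le' (Fin.zero_le _)).ne'

lemma le_inflow {f : FlowEdge n → ℝ} (hf : ∀ e, 0 ≤ f e) (e : FlowEdge n) :
    f e ≤ inflow f e.1.2 := by
  have := single_le_sum (f := fun e' : FlowEdge n => if e'.1.2 = e.1.2 then f e' else 0)
    (fun e' _ => by split_ifs <;> simp [hf]) (mem_univ e)
  simpa [inflow_apply] using this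

lemma inflow_nonneg {f : FlowEdge n → ℝ} (hf : ∀ e, 0 ≤ f e) (k : Fin (n + 1)) :
    0 ≤ inflow f k :=
  sum_nonneg fun e _ => by split_ifs <;> simp [hf]

lemma exists_pos_of_outflow_pos {f : FlowEdge n → ℝ} {k : Fin (n + 1)} (h : 0 < outflow f k) :
    ∃ e : FlowEdge n, e.1.1 = k ∧ 0 < f e := by
  by_contra! hf
  exact h.not_ge (sum_nonpos fun e _ => by split_ifs with he <;> simp [hf e, he])

def OutdegLeOne (f : FlowEdge n → ℝ) : Prop :=
  ∀ ⦃e e' : FlowEdge n⦄, f e ≠ 0 → f e' ≠ 0 → e.1.1 = e'.1.1 → e = e'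

theorem eq_zero_of_outdegLeOne {f g : FlowEdge n → ℝ} (hf : OutdegLeOne f)
    (hgf : ∀ e, f e = 0 → g e = 0) (hg : netflow g = 0) : g = 0 := by
  suffices ∀ u : Fin (n + 1), ∀ e : FlowEdge n, e.1.1 = u → g e = 0 from
    funext fun e => this _ e rfl
  intro u
  induction u using WellFoundedLT.induction with
  | _ u ih =>
  intro e rfl
  by_cases hfe : f e = 0
  · exact hgf e hfe
  -- the edges entering `e.1.1` come from smaller vertices, and `e` is the only edge leaving it
  have hin : inflow g e.1.1 = 0 :=
    sum_eq_zero fun e' _ => by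
      split_ifs with h
      exacts [ih _ (h ▸ e'.2) e' rfl, rfl]
  have hout : outflow g e.1.1 = g e := by
    rw [outflow_apply, sum_eq_single e (fun e' _ hne => ?_) (by simp), if_pos rfl]
    split_ifs with h
    exacts [hgf e' (by_contra fun h0 => hne (hf h0 hfe h)), rfl]
  simpa [netflow_apply, hin, hout] using congrFun hg e.1.1

theorem eq_zero_of_mem_extremePoints {a : Fin (n + 1) → ℝ} {f g : FlowEdge n → ℝ}
    (hf : f ∈ (flowPolytope n a).extremePoints ℝ) (hgf : ∀ e, f e = 0 → g e = 0)
    (hg : netflow g = 0) : g = 0 := by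
  obtain ⟨hf0, hfa⟩ := mem_flowPolytope.1 hf.1
  obtain ⟨ε, hεg, hε⟩ : ∃ ε : ℝ, (∀ e, ε * |g e| ≤ f e) ∧ 0 < ε := by
    have : ∀ e, ∀ᶠ ε in nhds (0 : ℝ), ε * |g e| ≤ f e := fun e => by
      rcases (hf0 e).eq_or_lt with h | h
      · simp [hgf e h.symm, ← h]
      · exact (ContinuousAt.eventually_lt (by fun_prop) continuousAt_const
          (by simpa using h)).mono fun _ => le_of_lt
    exact ((Filter.eventually_all.2 this).filter_mono nhdsWithin_le_nhds).and
      self_mem_nhdsWithin |>.exists (f := nhdsWithin 0 (Set.Ioi 0))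
  have hmem : ∀ σ : ℝ, |σ| = 1 → f + (σ * ε) • g ∈ flowPolytope n a := fun σ hσ => by
    refine mem_flowPolytope.2 ⟨fun e => ?_, by simp [hfa, hg]⟩
    have := neg_abs_le (σ * ε * g e)
    rw [abs_mul, abs_mul, hσ, abs_of_pos hε, one_mul] at this
    simp only [Pi.add_apply, Pi.smul_apply, smul_eq_mul]
    linarith [hεg e]
  have hseg : f ∈ openSegment ℝ (f + (1 * ε) • g) (f + (-1 * ε) • g) :=
    ⟨1 / 2, 1 / 2, by norm_num, by norm_num, by norm_num, by module⟩
  have := hf.2 (hmem 1 (by simp)) (hmem (-1) (by simp)) hseg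
  simpa [hε.ne'] using this

theorem mem_extremePoints_of_outdegLeOne {a : Fin (n + 1) → ℝ} {f : FlowEdge n → ℝ}
    (hf : f ∈ flowPolytope n a) (hu : OutdegLeOne f) : f ∈ (flowPolytope n a).extremePoints ℝ := by
  refine ⟨hf, fun x₁ h₁ x₂ h₂ ⟨p, q, hp, hq, _, hpq⟩ => ?_⟩
  obtain ⟨h₁0, h₁a⟩ := mem_flowPolytope.1 h₁
  have hfa := (mem_flowPolytope.1 hf).2
  have hsupp : ∀ e, f e = 0 → (x₁ - f) e = 0 := fun e he => by
    have := congrFun hpq e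
    simp only [Pi.add_apply, Pi.sub_apply, Pi.smul_apply, smul_eq_mul, he] at this ⊢
    nlinarith [h₁0 e, (mem_flowPolytope.1 h₂).1 e]
  have := eq_zero_of_outdegLeOne hu hsupp (by simp [h₁a, hfa])
  exact sub_eq_zero.1 this

def Step (f : FlowEdge n → ℝ) (u v : Fin (n + 1)) : Prop :=
  ∃ e : FlowEdge n, e.1.1 = u ∧ e.1.2 = v ∧ 0 < f e

def Reach (f : FlowEdge n → ℝ) (z : Fin (n + 1)) : Set (Fin (n + 1)) :=
  {v | Relation.ReflTransGen (Step f) z v}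

lemma Step.lt {f : FlowEdge n → ℝ} {u v : Fin (n + 1)} : Step f u v → u < v := by
  rintro ⟨e, rfl, rfl, -⟩
  exact e.2

lemma le_of_mem_reach {f : FlowEdge n → ℝ} {z v : Fin (n + 1)} (h : v ∈ Reach f z) : z ≤ v :=
  Relation.ReflTransGen.head_induction_on (motive := fun u _ => u ≤ v) h le_rfl
    fun hstep _ hle => hstep.lt.le.trans hle

lemma exists_netflow_eq_of_mem_reach {f : FlowEdge n → ℝ} {z v : Fin (n + 1)}
    (h : v ∈ Reach f z) : ∃ p : FlowEdge n → ℝ,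
      netflow p = Pi.single z 1 - Pi.single v 1 ∧ ∀ e, p e ≠ 0 → 0 < f e ∧ z ≤ e.1.1 := by
  induction h using Relation.ReflTransGen.head_induction_on with
  | refl => exact ⟨0, by simp, fun _ h => absurd rfl h⟩
  | head hstep _ ih =>
    obtain ⟨e, rfl, rfl, he⟩ := hstep
    obtain ⟨p, hp, hps⟩ := ih
    refine ⟨Pi.single e 1 + p, by rw [map_add, netflow_single, hp]; abel, fun e' he' => ?_⟩
    by_cases h : e' = e
    · subst h
      exact ⟨he, le_rfl⟩
    · have := hps e' (by simpa [Pi.single_apply, h] using he')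
      exact ⟨this.1, e.2.le.trans this.2⟩

section Sink

variable {a : Fin (n + 1) → ℝ} (ha : ∀ k ≠ Fin.last n, 0 ≤ a k)
include ha

-- Flow conservation: positive inflow at a vertex other than the sink forces positive outflow.
lemma last_mem_reach {f : FlowEdge n → ℝ} (hf : f ∈ flowPolytope n a) {e : FlowEdge n}
    (he : 0 < f e) : Fin.last n ∈ Reach f e.1.2 := by
  obtain ⟨hf0, hfa⟩ := mem_flowPolytope.1 hf
  suffices ∀ v, ∀ e : FlowEdge n, e.1.2 = v → 0 < f e → Fin.last n ∈ Reach f v from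
    this _ e rfl he
  intro v
  induction v using WellFoundedGT.induction with
  | _ v ih =>
  rintro e rfl he
  by_cases hv : e.1.2 = Fin.last n
  · exact hv ▸ Relation.ReflTransGen.refl
  have hout : 0 < outflow f e.1.2 := by
    have := congrFun hfa e.1.2
    rw [netflow_apply] at this
    linarith [le_inflow hf0 e, ha _ hv]
  obtain ⟨e', he', hpos⟩ := exists_pos_of_outflow_pos hout
  exact Relation.ReflTransGen.head ⟨e', he', rfl, hpos⟩ (ih _ (he' ▸ e'.2) e' rfl hpos)

theorem outdegLeOne_of_mem_extremePoints {f : FlowEdge n → ℝ}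
    (hf : f ∈ (flowPolytope n a).extremePoints ℝ) : OutdegLeOne f := by
  have hf0 := (mem_flowPolytope.1 hf.1).1
  intro e₁ e₂ h₁ h₂ hsrc
  by_contra hne
  have hpos : ∀ e, f e ≠ 0 → 0 < f e := fun e h => (hf0 e).lt_of_ne' h
  obtain ⟨p₁, hp₁, hp₁f⟩ := exists_netflow_eq_of_mem_reach (last_mem_reach ha hf.1 (hpos _ h₁))
  obtain ⟨p₂, hp₂, hp₂f⟩ := exists_netflow_eq_of_mem_reach (last_mem_reach ha hf.1 (hpos _ h₂))
  have hvanish : ∀ {p : FlowEdge n → ℝ} {v : Fin (n + 1)}, (∀ e, p e ≠ 0 → 0 < f e ∧ v ≤ e.1.1) →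
      ∀ e : FlowEdge n, e.1.1 < v → p e = 0 := fun hp e he =>
    by_contra fun h => (hp e h).2.not_gt he
  set g := (Pi.single e₂ 1 + p₂) - (Pi.single e₁ 1 + p₁)
  have hg : g = 0 := by
    refine eq_zero_of_mem_extremePoints hf (fun e he => ?_) ?_
    · have hp : ∀ {p : FlowEdge n → ℝ} {v : Fin (n + 1)},
          (∀ e, p e ≠ 0 → 0 < f e ∧ v ≤ e.1.1) → p e = 0 := fun hp =>
        by_contra fun h => (hp e h).1.ne' he
      have h₁e : e ≠ e₁ := fun h => h₁ (h ▸ he)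
      have h₂e : e ≠ e₂ := fun h => h₂ (h ▸ he)
      simp only [g, Pi.sub_apply, Pi.add_apply, Pi.single_apply, if_neg h₁e, if_neg h₂e,
        hp hp₁f, hp hp₂f, sub_self, add_zero]
    · simp only [g, map_sub, map_add, netflow_single, hp₁, hp₂, hsrc]
      abel
  have : g e₂ = 1 := by
    simp [g, Ne.symm hne, hvanish hp₁f e₂ (hsrc ▸ e₁.2),
      hvanish hp₂f e₂ e₂.2]
  simp [hg] at this

lemma last_mem_reach_of_outflow_pos {f : FlowEdge n → ℝ} (hf : f ∈ flowPolytope n a)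
    {z : Fin (n + 1)} (hz : 0 < outflow f z) : Fin.last n ∈ Reach f z := by
  obtain ⟨e, rfl, he⟩ := exists_pos_of_outflow_pos hz
  exact Relation.ReflTransGen.head ⟨e, rfl, rfl, he⟩ (last_mem_reach ha hf he)

theorem mem_extremePoints_iff {f : FlowEdge n → ℝ} :
    f ∈ (flowPolytope n a).extremePoints ℝ ↔ f ∈ flowPolytope n a ∧ OutdegLeOne f :=
  ⟨fun hf => ⟨hf.1, outdegLeOne_of_mem_extremePoints ha hf⟩,
    fun hf => mem_extremePoints_of_outdegLeOne hf.1 hf.2⟩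

end Sink

def IsConsecutive (S : Set (Fin (n + 1))) (e : FlowEdge n) : Prop :=
  e.1.1 ∈ S ∧ e.1.2 ∈ S ∧ ∀ x ∈ S, ¬(e.1.1 < x ∧ x < e.1.2)

noncomputable def pathFlow (S : Set (Fin (n + 1))) : FlowEdge n → ℝ :=
  {e | IsConsecutive S e}.indicator 1

lemma pathFlow_nonneg (S : Set (Fin (n + 1))) (e : FlowEdge n) : 0 ≤ pathFlow S e :=
  Set.indicator_nonneg (fun _ _ => zero_le_one) _

namespace IsConsecutive

variable {S : Set (Fin (n + 1))} {e e' : FlowEdge n}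

lemma eq_of_fst_eq (he : IsConsecutive S e) (he' : IsConsecutive S e') (h : e.1.1 = e'.1.1) :
    e = e' := by
  rcases lt_trichotomy e.1.2 e'.1.2 with hlt | heq | hgt
  · exact absurd ⟨h ▸ e.2, hlt⟩ (he'.2.2 _ he.2.1)
  · exact Subtype.ext (Prod.ext h heq)
  · exact absurd ⟨h.symm ▸ e'.2, hgt⟩ (he.2.2 _ he'.2.1)

lemma eq_of_snd_eq (he : IsConsecutive S e) (he' : IsConsecutive S e') (h : e.1.2 = e'.1.2) :
    e = e' := by
  rcases lt_trichotomy e.1.1 e'.1.1 with hlt | heq | hgt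
  · exact absurd ⟨hlt, h ▸ e'.2⟩ (he.2.2 _ he'.1)
  · exact Subtype.ext (Prod.ext heq h)
  · exact absurd ⟨hgt, h.symm ▸ e.2⟩ (he'.2.2 _ he.1)

end IsConsecutive

lemma exists_isConsecutive_fst {S : Set (Fin (n + 1))} {u v : Fin (n + 1)} (hu : u ∈ S)
    (hv : v ∈ S) (huv : u < v) : ∃ e : FlowEdge n, e.1.1 = u ∧ IsConsecutive S e := by
  obtain ⟨w, ⟨hwS, huw⟩, hmin⟩ :=
    (S ∩ Set.Ioi u).exists_min_image id (Set.toFinite _) ⟨v, hv, huv⟩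
  exact ⟨⟨(u, w), huw⟩, rfl, hu, hwS, fun x hx hux => (hmin x ⟨hx, hux.1⟩).not_gt hux.2⟩

lemma exists_isConsecutive_snd {S : Set (Fin (n + 1))} {u v : Fin (n + 1)} (hu : u ∈ S)
    (hv : v ∈ S) (huv : u < v) : ∃ e : FlowEdge n, e.1.2 = v ∧ IsConsecutive S e := by
  obtain ⟨w, ⟨hwS, hwv⟩, hmax⟩ :=
    (S ∩ Set.Iio v).exists_max_image id (Set.toFinite _) ⟨u, hu, huv⟩
  exact ⟨⟨(w, v), hwv⟩, rfl, hwS, hv, fun x hx hxv => (hmax x ⟨hx, hxv.2⟩).not_gt hxv.1⟩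

lemma outflow_pathFlow {S : Set (Fin (n + 1))} (hlast : Fin.last n ∈ S) :
    outflow (pathFlow S) = (S \ {Fin.last n}).indicator 1 := by
  ext k
  rw [outflow_apply]
  by_cases hk : k ∈ S \ {Fin.last n}
  · obtain ⟨e, rfl, he⟩ :=
      exists_isConsecutive_fst hk.1 hlast ((Fin.le_last _).lt_of_ne hk.2)
    rw [sum_eq_single e (fun e' _ hne => ?_) (by simp)]
    · simp [pathFlow, he, hk]
    split_ifs with h
    · exact Set.indicator_of_notMem (fun he' => hne (he'.eq_of_fst_eq he h)) _
    · rfl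
  · rw [Set.indicator_of_notMem hk]
    refine sum_eq_zero fun e _ => ?_
    split_ifs with h
    · exact Set.indicator_of_notMem
        (fun he => hk ⟨h ▸ he.1, h ▸ (e.2.trans_le (Fin.le_last _)).ne⟩) _
    · rfl

lemma inflow_pathFlow {S : Set (Fin (n + 1))} {z : Fin (n + 1)} (hz : IsLeast S z) :
    inflow (pathFlow S) = (S \ {z}).indicator 1 := by
  ext k
  rw [inflow_apply]
  by_cases hk : k ∈ S \ {z}
  · obtain ⟨e, rfl, he⟩ :=
      exists_isConsecutive_snd hz.1 hk.1 ((hz.2 hk.1).lt_of_ne' hk.2)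
    rw [sum_eq_single e (fun e' _ hne => ?_) (by simp)]
    · simp [pathFlow, he, hk]
    split_ifs with h
    · exact Set.indicator_of_notMem (fun he' => hne (he'.eq_of_snd_eq he h)) _
    · rfl
  · rw [Set.indicator_of_notMem hk]
    refine sum_eq_zero fun e _ => ?_
    split_ifs with h
    · exact Set.indicator_of_notMem
        (fun he => hk ⟨h ▸ he.2.1, h ▸ ((hz.2 he.1).trans_lt e.2).ne'⟩) _
    · rfl

lemma netflow_pathFlow {S : Set (Fin (n + 1))} {z : Fin (n + 1)} (hz : IsLeast S z)
    (hlast : Fin.last n ∈ S) :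
    netflow (pathFlow S) = Pi.single z 1 - Pi.single (Fin.last n) 1 := by
  classical
  ext k
  rw [netflow_apply, outflow_pathFlow hlast, inflow_pathFlow hz]
  by_cases hkz : k = z <;> by_cases hkl : k = Fin.last n <;>
    simp [Set.indicator_apply, Pi.single_apply, hkz, hkl, hz.1, hlast] <;>
    split_ifs <;> norm_num

section Reach

variable {f : FlowEdge n → ℝ} {z : Fin (n + 1)}

lemma Step.right_unique (hu : OutdegLeOne f) : Relator.RightUnique (Step f) := by
  rintro u v v' ⟨e, rfl, rfl, he⟩ ⟨e', he', rfl, he''⟩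
  rw [hu he.ne' he''.ne' he'.symm]

lemma mem_reach_of_le (hu : OutdegLeOne f) {x y : Fin (n + 1)} (hx : x ∈ Reach f z)
    (hy : y ∈ Reach f z) (hxy : x ≤ y) : y ∈ Reach f x := by
  rcases Relation.ReflTransGen.total_of_right_unique (Step.right_unique hu) hx hy with h | h
  · exact h
  · exact le_antisymm hxy (le_of_mem_reach h) ▸ Relation.ReflTransGen.refl

lemma pos_of_isConsecutive_reach (hu : OutdegLeOne f) {e : FlowEdge n}
    (he : IsConsecutive (Reach f z) e) : 0 < f e := by
  obtain ⟨h₁, h₂, hbetween⟩ := he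
  rcases Relation.ReflTransGen.cases_head (mem_reach_of_le hu h₁ h₂ e.2.le) with h | ⟨x, hstep, hx⟩
  · exact absurd h e.2.ne
  obtain ⟨e', hsrc, rfl, hpos⟩ := hstep
  obtain h | h := (le_of_mem_reach hx).eq_or_lt
  · rwa [← Subtype.ext (Prod.ext hsrc h)]
  · exact absurd ⟨hsrc ▸ e'.2, h⟩ (hbetween _ (h₁.tail ⟨e', hsrc, rfl, hpos⟩))

lemma subset_reach {S : Set (Fin (n + 1))} (hz : IsLeast S z)
    (hS : ∀ e, IsConsecutive S e → 0 < f e) : S ⊆ Reach f z := by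
  intro v hv
  induction v using WellFoundedLT.induction with
  | _ v ih =>
  obtain rfl | hzv := (hz.2 hv).eq_or_lt
  · exact Relation.ReflTransGen.refl
  obtain ⟨e, rfl, he⟩ := exists_isConsecutive_snd hz.1 hv hzv
  exact (ih _ e.2 he.1).tail ⟨e, rfl, rfl, hS e he⟩

end Reach

lemma add_pathFlow_ne_zero_iff {S T : Set (Fin (n + 1))} {e : FlowEdge n} :
    (pathFlow S + pathFlow T) e ≠ 0 ↔ IsConsecutive S e ∨ IsConsecutive T e := by
  by_cases hS : IsConsecutive S e <;> by_cases hT : IsConsecutive T e <;>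
    simp [pathFlow, hS, hT]

lemma add_pathFlow_pos_iff {S T : Set (Fin (n + 1))} {e : FlowEdge n} :
    0 < (pathFlow S + pathFlow T) e ↔ IsConsecutive S e ∨ IsConsecutive T e := by
  rw [← add_pathFlow_ne_zero_iff]
  exact ⟨ne_of_gt, fun h =>
    h.symm.lt_of_le (add_nonneg (pathFlow_nonneg S e) (pathFlow_nonneg T e))⟩

lemma isConsecutive_congr {S T : Set (Fin (n + 1))} {e : FlowEdge n}
    (h : ∀ y, e.1.1 ≤ y → (y ∈ S ↔ y ∈ T)) : IsConsecutive S e ↔ IsConsecutive T e := by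
  unfold IsConsecutive
  rw [h _ le_rfl, h _ e.2.le]
  exact and_congr_right' (and_congr_right'
    ⟨fun H x hx hb => H x ((h x hb.1.le).2 hx) hb, fun H x hx hb => H x ((h x hb.1.le).1 hx) hb⟩)

lemma reach_add_pathFlow {S T : Set (Fin (n + 1))} {z : Fin (n + 1)} (hz : IsLeast S z)
    (hST : ∀ x ∈ S, x ∈ T → ∀ y, x ≤ y → (y ∈ S ↔ y ∈ T)) :
    Reach (pathFlow S + pathFlow T) z = S := by
  refine subset_antisymm (fun v hv => ?_)
    (subset_reach hz fun e he => add_pathFlow_pos_iff.2 (Or.inl he))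
  induction hv with
  | refl => exact hz.1
  | tail _ hstep ih =>
    obtain ⟨e, rfl, rfl, hpos⟩ := hstep
    rcases add_pathFlow_pos_iff.1 hpos with hS | hT
    exacts [hS.2.1, (hST _ ih hT.1 _ e.2.le).2 hT.2.1]

-- The paper's `e₁ + e_{r+2} - 2 e_{n+1}`, with vertices numbered from `0` and second source `c`.
def mergeNetflow (c : Fin (n + 1)) : Fin (n + 1) → ℝ :=
  Pi.single 0 1 + Pi.single c 1 - Pi.single (Fin.last n) 2

lemma mergeNetflow_nonneg (c : Fin (n + 1)) : ∀ k ≠ Fin.last n, 0 ≤ mergeNetflow c k := by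
  intro k hk
  simp only [mergeNetflow, Pi.sub_apply, Pi.add_apply, Pi.single_apply, if_neg hk]
  split_ifs <;> norm_num

-- The vertex sets of two increasing paths to the sink, from `0` and from `c`, that coincide from
-- their first common vertex on.
structure IsMergingPair (c : Fin (n + 1)) (S T : Set (Fin (n + 1))) : Prop where
  zero_mem : 0 ∈ S
  isLeast : IsLeast T c
  last_mem_left : Fin.last n ∈ S
  last_mem_right : Fin.last n ∈ T
  mem_iff_mem : ∀ x ∈ S, x ∈ T → ∀ y, x ≤ y → (y ∈ S ↔ y ∈ T)

namespace IsMergingPair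

variable {c : Fin (n + 1)} {S T : Set (Fin (n + 1))} (h : IsMergingPair c S T)
include h

lemma add_pathFlow_mem : pathFlow S + pathFlow T ∈ flowPolytope n (mergeNetflow c) := by
  refine mem_flowPolytope.2
    ⟨fun e => add_nonneg (pathFlow_nonneg S e) (pathFlow_nonneg T e), ?_⟩
  rw [map_add, netflow_pathFlow ⟨h.zero_mem, fun x _ => Fin.zero_le x⟩ h.last_mem_left,
    netflow_pathFlow h.isLeast h.last_mem_right]
  ext k
  simp only [mergeNetflow, Pi.sub_apply, Pi.add_apply, Pi.single_apply]
  split_ifs <;> norm_num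

lemma outdegLeOne : OutdegLeOne (pathFlow S + pathFlow T) := by
  have key : ∀ {e e' : FlowEdge n}, IsConsecutive S e → IsConsecutive T e' → e.1.1 = e'.1.1 →
      e = e' := fun {e e'} he he' hsrc =>
    he.eq_of_fst_eq ((isConsecutive_congr (hsrc ▸ h.mem_iff_mem _ he.1 (hsrc ▸ he'.1))).2 he')
      hsrc
  intro e e' he he' hsrc
  rcases add_pathFlow_ne_zero_iff.1 he with hS | hT <;>
    rcases add_pathFlow_ne_zero_iff.1 he' with hS' | hT'
  exacts [hS.eq_of_fst_eq hS' hsrc, key hS hT' hsrc, (key hS' hT hsrc.symm).symm,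
    hT.eq_of_fst_eq hT' hsrc]

lemma reach_left : Reach (pathFlow S + pathFlow T) 0 = S :=
  reach_add_pathFlow ⟨h.zero_mem, fun x _ => Fin.zero_le x⟩ h.mem_iff_mem

lemma reach_right : Reach (pathFlow S + pathFlow T) c = T := by
  rw [add_comm (pathFlow S)]
  exact reach_add_pathFlow h.isLeast fun x hT hS y hxy => (h.mem_iff_mem x hS hT y hxy).symm

end IsMergingPair

def mergingPairs (c : Fin (n + 1)) : Set (Set (Fin (n + 1)) × Set (Fin (n + 1))) :=
  {p | IsMergingPair c p.1 p.2}

section Merge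

variable {c : Fin (n + 1)} {f : FlowEdge n → ℝ}

lemma isMergingPair_reach (hc0 : c ≠ 0) (hcl : c ≠ Fin.last n)
    (hf : f ∈ flowPolytope n (mergeNetflow c)) (hu : OutdegLeOne f) :
    IsMergingPair c (Reach f 0) (Reach f c) := by
  obtain ⟨hf0, hfa⟩ := mem_flowPolytope.1 hf
  have h0 := congrFun hfa 0
  have hc := congrFun hfa c
  have h0l : (0 : Fin (n + 1)) ≠ Fin.last n := fun h =>
    hc0 (le_antisymm (h ▸ Fin.le_last c) (Fin.zero_le c))
  simp only [netflow_apply, mergeNetflow, Pi.sub_apply, Pi.add_apply, Pi.single_apply,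
    inflow_zero, hc0, hcl, hc0.symm, h0l, if_true, if_false] at h0 hc
  have hreach : ∀ z, 0 < outflow f z → Fin.last n ∈ Reach f z := fun _ =>
    last_mem_reach_of_outflow_pos (mergeNetflow_nonneg c) hf
  refine ⟨.refl, ⟨.refl, fun x => le_of_mem_reach⟩, hreach 0 (by linarith),
    hreach c (by linarith [inflow_nonneg hf0 c]), fun x hx₀ hxc y hxy => ?_⟩
  exact ⟨fun hy => hxc.trans (mem_reach_of_le hu hx₀ hy hxy),
    fun hy => hx₀.trans (mem_reach_of_le hu hxc hy hxy)⟩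

lemma add_pathFlow_reach (hc0 : c ≠ 0) (hcl : c ≠ Fin.last n)
    (hf : f ∈ flowPolytope n (mergeNetflow c)) (hu : OutdegLeOne f) :
    pathFlow (Reach f 0) + pathFlow (Reach f c) = f := by
  have hm := isMergingPair_reach hc0 hcl hf hu
  refine sub_eq_zero.1 (eq_zero_of_outdegLeOne hu (fun e he => ?_) ?_)
  · have hpos : ∀ z, ¬IsConsecutive (Reach f z) e := fun z hcons =>
      (pos_of_isConsecutive_reach hu hcons).ne' he
    simp [pathFlow, hpos, he]
  · rw [map_sub, (mem_flowPolytope.1 hm.add_pathFlow_mem).2, (mem_flowPolytope.1 hf).2,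
      sub_self]

theorem extremePoints_mergeNetflow (hc0 : c ≠ 0) (hcl : c ≠ Fin.last n) :
    (flowPolytope n (mergeNetflow c)).extremePoints ℝ =
      (fun p => pathFlow p.1 + pathFlow p.2) '' mergingPairs c := by
  ext f
  rw [mem_extremePoints_iff (mergeNetflow_nonneg c)]
  constructor
  · rintro ⟨hf, hu⟩
    exact ⟨(Reach f 0, Reach f c), isMergingPair_reach hc0 hcl hf hu,
      add_pathFlow_reach hc0 hcl hf hu⟩
  · rintro ⟨p, hp, rfl⟩
    exact ⟨hp.add_pathFlow_mem, hp.outdegLeOne⟩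

lemma injOn_add_pathFlow :
    Set.InjOn (fun p => pathFlow p.1 + pathFlow p.2) (mergingPairs c) := by
  intro p hp q hq hpq
  simp only at hpq
  exact Prod.ext (by rw [← hp.reach_left, ← hq.reach_left, hpq])
    (by rw [← hp.reach_right, ← hq.reach_right, hpq])

end Merge

section Counting

variable {c : Fin (n + 1)}

-- The constraints at the vertex `v` on the labels `x = (v ∈ S)`, `y = (v ∈ T)` of a merging pair
-- `(S, T)` whose paths first meet at `m`.
def Admissible (c m v : Fin (n + 1)) (x y : Prop) : Prop :=
  (y → c ≤ v) ∧ (v = 0 → x) ∧ (v = c → y) ∧ (v < m → ¬(x ∧ y)) ∧ (m ≤ v → (x ↔ y)) ∧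
    (v = m ∨ v = Fin.last n → x)

instance (c m v : Fin (n + 1)) (x y : Prop) [Decidable x] [Decidable y] :
    Decidable (Admissible c m v x y) := by
  unfold Admissible; infer_instance

lemma isMergingPair_and_isLeast_iff {S T : Set (Fin (n + 1))} {m : Fin (n + 1)} :
    IsMergingPair c S T ∧ IsLeast (S ∩ T) m ↔ ∀ v, Admissible c m v (v ∈ S) (v ∈ T) := by
  constructor
  · rintro ⟨h, hm⟩ v
    refine ⟨fun hv => h.isLeast.2 hv, fun hv => hv ▸ h.zero_mem, fun hv => hv ▸ h.isLeast.1,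
      fun hvm hv => (hm.2 hv).not_gt hvm, h.mem_iff_mem m hm.1.1 hm.1.2 v, ?_⟩
    rintro (rfl | rfl)
    exacts [hm.1.1, h.last_mem_left]
  · intro H
    have hlast : Fin.last n ∈ S := (H _).2.2.2.2.2 (Or.inr rfl)
    have hmS : m ∈ S := (H m).2.2.2.2.2 (Or.inl rfl)
    have hle : ∀ x ∈ S ∩ T, m ≤ x := fun x hx => not_lt.1 fun hxm => (H x).2.2.2.1 hxm hx
    refine ⟨⟨(H 0).2.1 rfl, ⟨(H c).2.2.1 rfl, fun v hv => (H v).1 hv⟩, hlast,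
      ((H _).2.2.2.2.1 (Fin.le_last m)).1 hlast, fun x hxS hxT y hxy =>
        (H y).2.2.2.2.1 ((hle x ⟨hxS, hxT⟩).trans hxy)⟩,
      ⟨hmS, ((H m).2.2.2.2.1 le_rfl).1 hmS⟩, hle⟩

def admissibleLabels (c m v : Fin (n + 1)) : Finset (Bool × Bool) :=
  univ.filter fun q => Admissible c m v q.1 q.2

def ofLabels (ℓ : Fin (n + 1) → Bool × Bool) : Set (Fin (n + 1)) × Set (Fin (n + 1)) :=
  ({v | (ℓ v).1}, {v | (ℓ v).2})

lemma ofLabels_injective : Function.Injective (ofLabels (n := n)) := by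
  intro ℓ ℓ' h
  simp only [ofLabels, Prod.mk.injEq, Set.ext_iff, Set.mem_ofPred_eq] at h
  funext v
  exact Prod.ext (Bool.eq_iff_iff.2 (h.1 v)) (Bool.eq_iff_iff.2 (h.2 v))

lemma mem_piFinset_admissibleLabels_iff {m : Fin (n + 1)} {ℓ : Fin (n + 1) → Bool × Bool} :
    ℓ ∈ Fintype.piFinset (admissibleLabels c m) ↔
      IsMergingPair c (ofLabels ℓ).1 (ofLabels ℓ).2 ∧
        IsLeast ((ofLabels ℓ).1 ∩ (ofLabels ℓ).2) m := by
  rw [isMergingPair_and_isLeast_iff]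
  simp [admissibleLabels, ofLabels]

lemma ncard_mergingPairs_eq_sum :
    (mergingPairs c).ncard = ∑ m, ∏ v, #(admissibleLabels c m v) := by
  classical
  have hdisj : ((univ : Finset (Fin (n + 1))) : Set (Fin (n + 1))).PairwiseDisjoint
      fun m => Fintype.piFinset (admissibleLabels c m) := fun m _ m' _ hne =>
    disjoint_left.2 fun ℓ h h' => hne <|
      (mem_piFinset_admissibleLabels_iff.1 h).2.unique (mem_piFinset_admissibleLabels_iff.1 h').2
  have himage : mergingPairs c =
      ofLabels '' ↑(univ.biUnion fun m => Fintype.piFinset (admissibleLabels c m)) := by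
    ext p
    simp only [Set.mem_image, coe_biUnion, coe_univ, Set.mem_univ, Set.iUnion_true,
      Set.mem_iUnion, mem_coe, mem_piFinset_admissibleLabels_iff]
    constructor
    · obtain ⟨S, T⟩ := p
      intro h
      obtain ⟨m, hm, hmin⟩ := (S ∩ T).exists_min_image id (Set.toFinite _)
        ⟨_, h.last_mem_left, h.last_mem_right⟩
      exact ⟨fun v => (decide (v ∈ S), decide (v ∈ T)),
        ⟨m, by simpa [ofLabels] using ⟨h, hm, hmin⟩⟩, by simp [ofLabels]⟩
    · rintro ⟨ℓ, ⟨m, hm, -⟩, rfl⟩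
      exact hm
  rw [himage, Set.ncard_image_of_injective _ ofLabels_injective, Set.ncard_coe_finset,
    card_biUnion hdisj]
  simp [Fintype.card_piFinset]

lemma card_admissibleLabels (hc : 0 < c) {m : Fin (n + 1)} (hcm : c ≤ m) (v : Fin (n + 1)) :
    #(admissibleLabels c m v) =
      (if v ∈ Ioo 0 c then 2 else 1) * (if v ∈ Ioo c m then 3 else 1) *
        (if v ∈ Ioo m (Fin.last n) then 2 else 1) := by
  rw [admissibleLabels, card_filter, Fintype.sum_prod_type, Fintype.sum_bool, Fintype.sum_bool,
    Fintype.sum_bool]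
  simp only [Fin.lt_def, Fin.le_def, Fin.val_zero] at hc hcm
  simp only [Admissible, mem_Ioo, Fin.lt_def, Fin.le_def, Fin.ext_iff, Fin.val_zero,
    Fin.val_last, Bool.false_eq_true, true_implies, false_implies, imp_true_iff, and_true,
    true_and, and_false, not_true, not_false_iff, iff_true, iff_false, imp_false]
  have := m.isLt
  have := v.isLt
  split_ifs <;> omega

lemma card_admissibleLabels_self {m : Fin (n + 1)} (hmc : m < c) :
    #(admissibleLabels c m m) = 0 := by
  simp only [admissibleLabels, card_eq_zero, filter_eq_empty_iff]
  rintro q - ⟨hc, -, -, -, hmem, hm⟩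
  exact hmc.not_ge (hc ((hmem le_rfl).1 (hm (Or.inl rfl))))

lemma prod_card_admissibleLabels (hc : 0 < c) {m : Fin (n + 1)} (hcm : c ≤ m) :
    ∏ v, #(admissibleLabels c m v) =
      2 ^ ((c : ℕ) - 1) * 3 ^ ((m : ℕ) - c - 1) * 2 ^ (n - m - 1) := by
  simp only [card_admissibleLabels hc hcm, prod_mul_distrib, Fintype.prod_ite_mem, prod_const,
    Fin.card_Ioo, Fin.val_zero, Fin.val_last, Nat.sub_zero]

lemma sum_three_pow_mul_two_pow (k : ℕ) :
    ∑ i ∈ range (k + 1), 3 ^ (i - 1) * 2 ^ (k - i) = 3 ^ k := by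
  induction k with
  | zero => simp
  | succ k ih =>
    rw [sum_range_succ, Nat.sub_self, pow_zero, mul_one, Nat.add_sub_cancel]
    have : ∑ i ∈ range (k + 1), 3 ^ (i - 1) * 2 ^ (k + 1 - i) =
        2 * ∑ i ∈ range (k + 1), 3 ^ (i - 1) * 2 ^ (k - i) := by
      rw [mul_sum]
      refine sum_congr rfl fun i hi => ?_
      rw [Nat.sub_add_comm (Nat.le_of_lt_succ (mem_range.1 hi)), pow_succ]
      ring
    rw [this, ih]
    ring

lemma sum_range_ite_two_pow_mul_three_pow {c N : ℕ} (hc : 0 < c) (hcN : c < N) :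
    ∑ j ∈ range (N + 1), (if c ≤ j then 2 ^ (c - 1) * 3 ^ (j - c - 1) * 2 ^ (N - j - 1) else 0) =
      2 ^ c * 3 ^ (N - c - 1) := by
  obtain ⟨k, rfl⟩ : ∃ k, N = c + (k + 1) := ⟨N - c - 1, by omega⟩
  rw [show c + (k + 1) + 1 = c + (k + 2) by ring, sum_range_add,
    sum_eq_zero fun i hi => if_neg (by simp at hi; omega), zero_add,
    sum_congr rfl fun i hi => if_pos (Nat.le_add_right _ _)]
  have hexp : ∀ i ∈ range (k + 2),
      2 ^ (c - 1) * 3 ^ (c + i - c - 1) * 2 ^ (c + (k + 1) - (c + i) - 1) =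
        2 ^ (c - 1) * (3 ^ (i - 1) * 2 ^ (k - i)) := fun i _ => by
    rw [show c + i - c - 1 = i - 1 by omega, show c + (k + 1) - (c + i) - 1 = k - i by omega,
      mul_assoc]
  rw [sum_congr rfl hexp, ← mul_sum, sum_range_succ, sum_three_pow_mul_two_pow,
    show c + (k + 1) - c - 1 = k by omega, Nat.add_sub_cancel, Nat.sub_eq_zero_of_le k.le_succ,
    pow_zero, mul_one, ← two_mul, ← mul_assoc, ← pow_succ, Nat.sub_add_cancel hc]

theorem ncard_mergingPairs (hc : 0 < c) (hcn : c < Fin.last n) :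
    (mergingPairs c).ncard = 2 ^ (c : ℕ) * 3 ^ (n - c - 1) := by
  have hprod : ∀ m : Fin (n + 1), ∏ v, #(admissibleLabels c m v) =
      if (c : ℕ) ≤ m then 2 ^ ((c : ℕ) - 1) * 3 ^ ((m : ℕ) - c - 1) * 2 ^ (n - m - 1) else 0 := by
    intro m
    split_ifs with h
    · exact prod_card_admissibleLabels hc h
    · exact prod_eq_zero (mem_univ m) (card_admissibleLabels_self (not_le.1 h))
  rw [ncard_mergingPairs_eq_sum, sum_congr rfl fun m _ => hprod m,
    Fin.sum_univ_eq_sum_range (fun j => if (c : ℕ) ≤ j then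
      2 ^ ((c : ℕ) - 1) * 3 ^ (j - c - 1) * 2 ^ (n - j - 1) else 0) (n + 1)]
  exact sum_range_ite_two_pow_mul_three_pow hc hcn

end Counting

theorem ncard_extremePoints_mergeNetflow {c : Fin (n + 1)} (hc : 0 < c) (hcn : c < Fin.last n) :
    ((flowPolytope n (mergeNetflow c)).extremePoints ℝ).ncard = 2 ^ (c : ℕ) * 3 ^ (n - c - 1) := by
  rw [extremePoints_mergeNetflow hc.ne' hcn.ne, injOn_add_pathFlow.ncard_image,
    ncard_mergingPairs hc hcn]

end FlowPolytope

/-- For `n = r + s + 2` and `a = (1, 0,…,0, 1, 0,…,0, −2)` (with the two `1`'s in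
positions `1` and `r+2`, and `−2` in position `n+1`, 1-indexed), the flow polytope
`F_{K_{n+1}}(a)` has exactly `2^{r+1} 3^s` vertices (extreme points). -/
theorem stmt7 (r s : ℕ) :
    (Set.extremePoints ℝ (flowPolytope (r + s + 2) (fun k =>
        if (k : ℕ) = 0 then 1
        else if (k : ℕ) = r + 1 then 1
        else if (k : ℕ) = r + s + 2 then -2
        else 0))).ncard = 2 ^ (r + 1) * 3 ^ s := by
  have hnetflow : (fun k : Fin (r + s + 2 + 1) =>
      if (k : ℕ) = 0 then (1 : ℝ) else if (k : ℕ) = r + 1 then 1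
      else if (k : ℕ) = r + s + 2 then -2 else 0) =
        FlowPolytope.mergeNetflow ⟨r + 1, by omega⟩ := by
    ext k
    simp only [FlowPolytope.mergeNetflow, Pi.sub_apply, Pi.add_apply, Pi.single_apply,
      Fin.ext_iff, Fin.val_zero, Fin.val_last]
    split_ifs <;> norm_num <;> omega
  rw [hnetflow, FlowPolytope.ncard_extremePoints_mergeNetflow (by simp [Fin.lt_def])
    (by simp [Fin.lt_def]), Fin.val_mk, show r + s + 2 - (r + 1) - 1 = s by omega]
end

section
/- Let r, s ≥ 0 be integers and n = r + s + 2. Then the number of pairs (V, f), where {1, r+2} ⊆ V ⊆ [n], f : V → V satisfies f(v) ≥ v for all v ∈ V, and every u ∈ V such that (f(v) = u implies v = u) belongs to {1, r+2}, equals 2^{r+1} · 3^{s}. (Such pairs (V,f) encode exactly the decreasing forests on V whose leaves are all contained in {1, r+2}.) -/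
/-!
Let `t` be the largest element of the ambient set `U ∪ {t}`. In a forest containing `t`, the
vertex `t` is a root; deleting it turns its children into roots. Conversely, a forest on `U`
together with any set `C` of its roots becomes a forest on `U ∪ {t}` by making `t` the parent of
`C`; when `t` is not an allowed leaf, `C` must be nonempty, and the forests avoiding `t` are
just the forests on `U`. Since the new forest has `k - |C| + 1` roots and
`∑_{C ⊆ R} x^{|R| - |C| + 1} = x (1 + x)^{|R|}`, the generating function `W` of the forests by
number of roots satisfies
  `W_{U ∪ {t}, L}(x) = x W_{U, L \ {t}}(x + 1) + [t ∉ L] (1 - x) W_{U, L}(x)`.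
For allowed leaves `a < b`, adding vertices in increasing order: `W = 1` below `a`, the vertex
`a` gives `x`, each vertex between `a` and `b` doubles `W`, the vertex `b` gives
`2^r (x + x²)`, and each later vertex multiplies `W` by `3`. The count is `W(1)`.
-/

open Finset

namespace DecForest

variable {α : Type*} [LinearOrder α]

structure IsDecForest (U L : Finset α) (p : Finset α × (α → α)) : Prop where
  subset : p.1 ⊆ U
  subset_vertices : L ⊆ p.1
  mapsTo : ∀ v ∈ p.1, p.2 v ∈ p.1
  le_apply : ∀ v ∈ p.1, v ≤ p.2 v
  apply_of_notMem : ∀ v ∉ p.1, p.2 v = v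
  mem_of_isLeaf : ∀ u ∈ p.1, (∀ v ∈ p.1, p.2 v = u → v = u) → u ∈ L

def roots (p : Finset α × (α → α)) : Finset α := p.1.filter fun v => p.2 v = v

def children (t : α) (p : Finset α × (α → α)) : Finset α :=
  (p.1.erase t).filter fun v => p.2 v = t

def eraseTop (t : α) (p : Finset α × (α → α)) : Finset α × (α → α) :=
  (p.1.erase t, fun v => if p.2 v = t then v else p.2 v)

def insertTop (t : α) (p : Finset α × (α → α)) (C : Finset α) : Finset α × (α → α) :=
  (insert t p.1, fun v => if v = t ∨ v ∈ C then t else p.2 v)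

variable {U L : Finset α} {t : α} {p : Finset α × (α → α)} {C : Finset α}

@[simp]
lemma mem_roots {v : α} : v ∈ roots p ↔ v ∈ p.1 ∧ p.2 v = v := mem_filter

lemma IsDecForest.notMem_of_lt (h : IsDecForest U L p) (ht : ∀ u ∈ U, u < t) : t ∉ p.1 :=
  fun htp => (ht t (h.subset htp)).false

lemma IsDecForest.apply_top (h : IsDecForest (insert t U) L p) (ht : ∀ u ∈ U, u < t) :
    p.2 t = t := by
  by_cases htp : t ∈ p.1
  · rcases mem_insert.1 (h.subset (h.mapsTo t htp)) with hft | hft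
    · exact hft
    · exact absurd (h.le_apply t htp) (ht _ hft).not_ge
  · exact h.apply_of_notMem t htp

lemma isDecForest_eraseTop (h : IsDecForest (insert t U) L p) (ht : ∀ u ∈ U, u < t) :
    IsDecForest U (L.erase t) (eraseTop t p) where
  subset v hv := by
    obtain ⟨hvt, hvp⟩ := mem_erase.1 hv
    exact (mem_insert.1 (h.subset hvp)).resolve_left hvt
  subset_vertices := erase_subset_erase t h.subset_vertices
  mapsTo v hv := by
    obtain ⟨hvt, hvp⟩ := mem_erase.1 hv
    dsimp only [DecForest.eraseTop]
    split_ifs with hfv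
    · exact hv
    · exact mem_erase.2 ⟨hfv, h.mapsTo v hvp⟩
  le_apply v hv := by
    dsimp only [DecForest.eraseTop]
    split_ifs
    · exact le_rfl
    · exact h.le_apply v (mem_of_mem_erase hv)
  apply_of_notMem v hv := by
    dsimp only [DecForest.eraseTop]
    by_cases hvt : v = t
    · subst hvt; simp [h.apply_top ht]
    · have hfv : p.2 v = v := h.apply_of_notMem v fun hvp => hv (mem_erase.2 ⟨hvt, hvp⟩)
      simp [hfv]
  mem_of_isLeaf u hu hleaf := by
    obtain ⟨hut, hup⟩ := mem_erase.1 hu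
    refine mem_erase.2 ⟨hut, h.mem_of_isLeaf u hup fun v hvp hfv => ?_⟩
    have hvt : v ≠ t := by
      rintro rfl
      exact hut (hfv ▸ h.apply_top ht)
    refine hleaf v (mem_erase.2 ⟨hvt, hvp⟩) ?_
    simp [DecForest.eraseTop, hfv, hut]

lemma children_subset_roots_eraseTop : children t p ⊆ roots (eraseTop t p) := by
  intro v hv
  obtain ⟨hv, hfv⟩ := mem_filter.1 hv
  exact mem_roots.2 ⟨hv, by simp [DecForest.eraseTop, hfv]⟩

lemma IsDecForest.children_nonempty (h : IsDecForest U L p) (htp : t ∈ p.1) (htL : t ∉ L) :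
    (children t p).Nonempty := by
  by_contra hC
  refine htL (h.mem_of_isLeaf t htp fun v hvp hfv => by_contra fun hvt => hC ?_)
  exact ⟨v, mem_filter.2 ⟨mem_erase.2 ⟨hvt, hvp⟩, hfv⟩⟩

lemma IsDecForest.insertTop_eraseTop (h : IsDecForest (insert t U) L p)
    (ht : ∀ u ∈ U, u < t) (htp : t ∈ p.1) :
    insertTop t (eraseTop t p) (children t p) = p := by
  refine Prod.ext (insert_erase htp) (funext fun v => ?_)
  dsimp only [DecForest.insertTop, DecForest.eraseTop, children]
  by_cases hvt : v = t
  · subst hvt; simp [h.apply_top ht]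
  by_cases hfv : p.2 v = t
  · have hvp : v ∈ p.1 := by_contra fun hvp => hvt ((h.apply_of_notMem v hvp).symm.trans hfv)
    simp [hfv, hvt, hvp]
  · simp [hvt, hfv]

lemma isDecForest_insertTop (h : IsDecForest U (L.erase t) p) (ht : ∀ u ∈ U, u < t)
    (hC : C ⊆ roots p) (hCL : C.Nonempty ∨ t ∈ L) :
    IsDecForest (insert t U) L (insertTop t p C) := by
  have hCp : ∀ c ∈ C, c ∈ p.1 ∧ p.2 c = c := fun c hc => mem_roots.1 (hC hc)
  have hlt : ∀ v ∈ p.1, v < t := fun v hv => ht v (h.subset hv)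
  refine ⟨insert_subset_insert t h.subset, fun l hl => ?_, fun v hv => ?_, fun v hv => ?_,
    fun v hv => ?_, fun u hu hleaf => ?_⟩
  · by_cases hlt : l = t
    · exact hlt ▸ mem_insert_self t p.1
    · exact mem_insert_of_mem (h.subset_vertices (mem_erase.2 ⟨hlt, hl⟩))
  · dsimp only [DecForest.insertTop] at hv ⊢
    split_ifs with hvC
    · exact mem_insert_self t p.1
    · push Not at hvC
      exact mem_insert_of_mem (h.mapsTo v ((mem_insert.1 hv).resolve_left hvC.1))
  · dsimp only [DecForest.insertTop] at hv ⊢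
    split_ifs with hvC
    · rcases mem_insert.1 hv with rfl | hv
      · exact le_rfl
      · exact (hlt v hv).le
    · push Not at hvC
      exact h.le_apply v ((mem_insert.1 hv).resolve_left hvC.1)
  · obtain ⟨hvt, hvp⟩ := not_or.1 (mt mem_insert.2 hv)
    have hvC : v ∉ C := fun hvC => hvp (hCp v hvC).1
    simp [DecForest.insertTop, hvt, hvC, h.apply_of_notMem v hvp]
  · rcases mem_insert.1 hu with rfl | hup
    · refine hCL.resolve_left fun ⟨c, hc⟩ => ?_
      have hc' := (hlt c (hCp c hc).1).ne
      exact hc' (hleaf c (mem_insert_of_mem (hCp c hc).1) (by simp [DecForest.insertTop, hc]))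
    · refine mem_of_mem_erase (h.mem_of_isLeaf u hup fun v hvp hfv => ?_)
      by_cases hvC : v ∈ C
      · exact (hCp v hvC).2.symm.trans hfv
      · refine hleaf v (mem_insert_of_mem hvp) ?_
        simp [DecForest.insertTop, (hlt v hvp).ne, hvC, hfv]

lemma IsDecForest.eraseTop_insertTop (h : IsDecForest U L p) (ht : ∀ u ∈ U, u < t)
    (hC : C ⊆ roots p) : eraseTop t (insertTop t p C) = p := by
  have htp := h.notMem_of_lt ht
  refine Prod.ext (erase_insert htp) (funext fun v => ?_)
  dsimp only [DecForest.insertTop, DecForest.eraseTop]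
  by_cases hvt : v = t
  · subst hvt; simp [h.apply_of_notMem v htp]
  by_cases hvC : v ∈ C
  · simp [hvC, (mem_roots.1 (hC hvC)).2]
  · have hfv : p.2 v ≠ t := fun hfv => htp (hfv ▸ h.mapsTo v (by_contra fun hvp =>
      hvt ((h.apply_of_notMem v hvp).symm.trans hfv)))
    simp [hvt, hvC, hfv]

lemma IsDecForest.children_insertTop (h : IsDecForest U L p) (ht : ∀ u ∈ U, u < t)
    (hC : C ⊆ roots p) : children t (insertTop t p C) = C := by
  have htp := h.notMem_of_lt ht
  ext v
  rw [children, mem_filter, mem_erase]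
  simp only [DecForest.insertTop, mem_insert]
  constructor
  · rintro ⟨⟨hvt, hv⟩, hfv⟩
    by_contra hvC
    rw [if_neg (by tauto)] at hfv
    exact htp (hfv ▸ h.mapsTo v (hv.resolve_left hvt))
  · intro hvC
    have hvp := (mem_roots.1 (hC hvC)).1
    exact ⟨⟨(ht v (h.subset hvp)).ne, Or.inr hvp⟩, if_pos (Or.inr hvC)⟩

lemma roots_insertTop : roots (insertTop t p C) = insert t (roots p \ C) := by
  ext v
  simp only [mem_roots, DecForest.insertTop, mem_insert, mem_sdiff]
  by_cases hvt : v = t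
  · simp [hvt]
  by_cases hvC : v ∈ C
  · simp [hvt, hvC, Ne.symm hvt]
  · simp [hvt, hvC]

lemma card_roots_insertTop (htp : t ∉ p.1) (hC : C ⊆ roots p) :
    #(roots (insertTop t p C)) = #(roots p) - #C + 1 := by
  have htR : t ∉ roots p \ C := fun htR => htp (mem_roots.1 (mem_sdiff.1 htR).1).1
  rw [roots_insertTop, card_insert_of_notMem htR, card_sdiff_of_subset hC]

lemma isDecForest_insert_iff (htp : t ∉ p.1) :
    IsDecForest (insert t U) L p ↔ IsDecForest U L p := by
  refine ⟨fun h => { h with subset := fun v hv => ?_ },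
    fun h => { h with subset := h.subset.trans (subset_insert t U) }⟩
  exact (mem_insert.1 (h.subset hv)).resolve_left fun hvt => htp (hvt ▸ hv)

lemma sum_powerset_filter_pow_card_sub {β : Type*} (R : Finset β) (b : Prop) [Decidable b]
    (x : ℤ) : ∑ C ∈ R.powerset with C.Nonempty ∨ b, x ^ (#R - #C + 1) =
      x * (x + 1) ^ #R - if b then 0 else x * x ^ #R := by
  have hall : ∑ C ∈ R.powerset, x ^ (#R - #C + 1) = x * (x + 1) ^ #R := by
    rw [add_comm x 1, ← sum_pow_mul_eq_add_pow, mul_sum]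
    exact sum_congr rfl fun C _ => by ring
  split_ifs with hb
  · simp [hb, hall]
  · have hempty : {C ∈ R.powerset | ¬(C.Nonempty ∨ b)} = {∅} := by
      ext C
      simp only [mem_filter, mem_powerset, hb, or_false, not_nonempty_iff_eq_empty,
        mem_singleton]
      exact ⟨And.right, fun hC => ⟨hC ▸ empty_subset R, hC⟩⟩
    rw [← hall, ← sum_filter_add_sum_filter_not R.powerset (fun C => C.Nonempty ∨ b), hempty,
      sum_singleton, card_empty, Nat.sub_zero, pow_succ]
    ring

lemma card_filter_insert_of_lt (ht : ∀ u ∈ U, u < t) (q : α → Prop) [DecidablePred q] :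
    #{u ∈ insert t U | q u} = #{u ∈ U | q u} + if q t then 1 else 0 := by
  have htU : t ∉ {u ∈ U | q u} := fun htU => (ht t (mem_filter.1 htU).1).false
  rw [filter_insert]
  split_ifs
  · exact card_insert_of_notMem htU
  · rfl

section Counting

variable [Fintype α]

open scoped Classical in
noncomputable def forests (U L : Finset α) : Finset (Finset α × (α → α)) :=
  {p | IsDecForest U L p}

lemma mem_forests : p ∈ forests U L ↔ IsDecForest U L p := by
  simp [forests]

lemma sum_forests_insert {M : Type*} [AddCommMonoid M] (ht : ∀ u ∈ U, u < t)
    (φ : Finset α × (α → α) → M) :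
    ∑ p ∈ forests (insert t U) L, φ p =
      ∑ p ∈ forests U (L.erase t), ∑ C ∈ (roots p).powerset with C.Nonempty ∨ t ∈ L,
        φ (insertTop t p C) + ∑ p ∈ forests U L, φ p := by
  rw [← sum_filter_add_sum_filter_not _ (fun p => t ∈ p.1)]
  congr 1
  · rw [sum_sigma']
    refine (sum_nbij' (fun x : (_ : Finset α × (α → α)) × Finset α => insertTop t x.1 x.2)
      (fun p => ⟨eraseTop t p, children t p⟩) ?_ ?_ ?_ ?_ fun _ _ => rfl).symm
    · rintro ⟨p, C⟩ hpC
      simp only [mem_sigma, mem_forests, mem_filter, mem_powerset] at hpC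
      exact mem_filter.2 ⟨mem_forests.2 (isDecForest_insertTop hpC.1 ht hpC.2.1 hpC.2.2),
        mem_insert_self t p.1⟩
    · intro p hp
      obtain ⟨hp, htp⟩ := mem_filter.1 hp
      have hp := mem_forests.1 hp
      simp only [mem_sigma, mem_forests, mem_filter, mem_powerset]
      exact ⟨isDecForest_eraseTop hp ht, children_subset_roots_eraseTop,
        or_iff_not_imp_right.2 (hp.children_nonempty htp)⟩
    · rintro ⟨p, C⟩ hpC
      simp only [mem_sigma, mem_forests, mem_filter, mem_powerset] at hpC
      rw [hpC.1.eraseTop_insertTop ht hpC.2.1, hpC.1.children_insertTop ht hpC.2.1]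
    · intro p hp
      obtain ⟨hp, htp⟩ := mem_filter.1 hp
      exact (mem_forests.1 hp).insertTop_eraseTop ht htp
  · congr 1
    ext p
    simp only [mem_filter, mem_forests]
    exact ⟨fun ⟨h, htp⟩ => (isDecForest_insert_iff htp).1 h, fun h =>
      ⟨(isDecForest_insert_iff (h.notMem_of_lt ht)).2 h, h.notMem_of_lt ht⟩⟩

noncomputable def rootGF (U L : Finset α) (x : ℤ) : ℤ :=
  ∑ p ∈ forests U L, x ^ #(roots p)

lemma rootGF_insert (ht : ∀ u ∈ U, u < t) (x : ℤ) :
    rootGF (insert t U) L x =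
      x * rootGF U (L.erase t) (x + 1) + if t ∈ L then 0 else (1 - x) * rootGF U L x := by
  have inner : ∀ p ∈ forests U (L.erase t),
      ∑ C ∈ (roots p).powerset with C.Nonempty ∨ t ∈ L, x ^ #(roots (insertTop t p C)) =
        x * (x + 1) ^ #(roots p) - if t ∈ L then 0 else x * x ^ #(roots p) := by
    intro p hp
    have htp := (mem_forests.1 hp).notMem_of_lt ht
    rw [← sum_powerset_filter_pow_card_sub]
    refine sum_congr rfl fun C hC => ?_
    rw [card_roots_insertTop htp (mem_powerset.1 (mem_filter.1 hC).1)]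
  rw [rootGF, sum_forests_insert ht, sum_congr rfl inner, sum_sub_distrib, ← mul_sum]
  split_ifs with htL
  · have : forests U L = ∅ := eq_empty_of_forall_notMem fun p hp =>
      (mem_forests.1 hp).notMem_of_lt ht ((mem_forests.1 hp).subset_vertices htL)
    simp [rootGF, this]
  · rw [erase_eq_of_notMem htL, rootGF, rootGF, ← mul_sum]
    ring

lemma card_forests (U L : Finset α) : (#(forests U L) : ℤ) = rootGF U L 1 := by
  simp [rootGF]

lemma rootGF_empty_empty (x : ℤ) : rootGF (∅ : Finset α) ∅ x = 1 := by
  have : forests (∅ : Finset α) ∅ = {(∅, id)} := by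
    ext p
    rw [mem_forests, mem_singleton]
    constructor
    · intro h
      have hp : p.1 = ∅ := subset_empty.1 h.subset
      exact Prod.ext hp (funext fun v => h.apply_of_notMem v (hp ▸ notMem_empty v))
    · rintro rfl
      exact ⟨subset_refl _, empty_subset _, by simp, by simp, fun _ _ => rfl, by simp⟩
  simp [rootGF, this, roots]

lemma rootGF_empty_right (U : Finset α) (x : ℤ) : rootGF U ∅ x = 1 := by
  induction U using Finset.induction_on_max generalizing x with
  | empty => exact rootGF_empty_empty x
  | insert t U ht ih =>
    rw [rootGF_insert ht, erase_empty, ih, ih, if_neg (notMem_empty t)]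
    ring

lemma rootGF_singleton {a : α} (ha : a ∈ U) (x : ℤ) :
    rootGF U {a} x = 2 ^ #{u ∈ U | a < u} * x := by
  induction U using Finset.induction_on_max generalizing x with
  | empty => exact absurd ha (notMem_empty a)
  | insert t U ht ih =>
    rw [rootGF_insert ht, card_filter_insert_of_lt ht]
    rcases eq_or_ne t a with rfl | hta
    · have : {u ∈ U | t < u} = ∅ := filter_false_of_mem fun u hu => (ht u hu).not_gt
      rw [erase_singleton, rootGF_empty_right, if_pos (mem_singleton_self t), this]
      simp
    · have haU : a ∈ U := (mem_insert.1 ha).resolve_left hta.symm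
      rw [erase_eq_of_notMem (by simpa using hta), if_neg (by simpa using hta), ih haU,
        ih haU, if_pos (ht a haU), pow_succ]
      ring

lemma rootGF_pair {a b : α} (hab : a < b) (ha : a ∈ U) (hb : b ∈ U) (x : ℤ) :
    rootGF U {a, b} x =
      2 ^ #{u ∈ U | a < u ∧ u < b} * 3 ^ #{u ∈ U | b < u} * (x + x ^ 2) := by
  induction U using Finset.induction_on_max generalizing x with
  | empty => exact absurd hb (notMem_empty b)
  | insert t U ht ih =>
    rw [rootGF_insert ht, card_filter_insert_of_lt ht, card_filter_insert_of_lt ht]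
    rcases eq_or_ne t b with rfl | htb
    · have haU : a ∈ U := (mem_insert.1 ha).resolve_left hab.ne
      have hbelow : {u ∈ U | a < u ∧ u < t} = {u ∈ U | a < u} :=
        filter_congr fun u hu => and_iff_left (ht u hu)
      have habove : {u ∈ U | t < u} = ∅ := filter_false_of_mem fun u hu => (ht u hu).not_gt
      rw [erase_insert_of_ne hab.ne, erase_singleton, insert_empty, rootGF_singleton haU,
        if_pos (mem_insert_of_mem (mem_singleton_self t)), hbelow, habove]
      simp only [lt_self_iff_false, and_false, if_false, add_zero, card_empty, pow_zero]
      ring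
    · have hbU : b ∈ U := (mem_insert.1 hb).resolve_left htb.symm
      have htL : t ∉ ({a, b} : Finset α) := by
        simp [(hab.trans (ht b hbU)).ne', htb]
      have haU : a ∈ U := (mem_insert.1 ha).resolve_left (hab.trans (ht b hbU)).ne
      rw [erase_eq_of_notMem htL, if_neg htL, ih haU hbU, ih haU hbU,
        if_neg fun h => (h.2.trans (ht b hbU)).false, if_pos (ht b hbU), pow_succ]
      ring

end Counting

end DecForest

open DecForest

/-- Vertices are 0-indexed, so `1 ↦ 0` and `r+2 ↦ r+1`, and `f` is extended by the identity
outside `V`. -/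
theorem stmt9 (r s : ℕ) :
    Nat.card {p : Finset (Fin (r + s + 2)) × (Fin (r + s + 2) → Fin (r + s + 2)) //
        (⟨0, by omega⟩ : Fin (r + s + 2)) ∈ p.1 ∧
        (⟨r + 1, by omega⟩ : Fin (r + s + 2)) ∈ p.1 ∧
        (∀ v ∈ p.1, p.2 v ∈ p.1 ∧ v ≤ p.2 v) ∧
        (∀ v, v ∉ p.1 → p.2 v = v) ∧
        (∀ u ∈ p.1, (∀ v ∈ p.1, p.2 v = u → v = u) →
          u = (⟨0, by omega⟩ : Fin (r + s + 2)) ∨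
          u = (⟨r + 1, by omega⟩ : Fin (r + s + 2)))}
      = 2 ^ (r + 1) * 3 ^ s := by
  set a : Fin (r + s + 2) := ⟨0, by omega⟩
  set b : Fin (r + s + 2) := ⟨r + 1, by omega⟩
  have hab : a < b := Fin.mk_lt_mk.2 (Nat.succ_pos r)
  have hforest : ∀ p, IsDecForest univ {a, b} p ↔ a ∈ p.1 ∧ b ∈ p.1 ∧
      (∀ v ∈ p.1, p.2 v ∈ p.1 ∧ v ≤ p.2 v) ∧ (∀ v, v ∉ p.1 → p.2 v = v) ∧
      (∀ u ∈ p.1, (∀ v ∈ p.1, p.2 v = u → v = u) → u = a ∨ u = b) := fun p =>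
    ⟨fun h => ⟨h.subset_vertices (by simp), h.subset_vertices (by simp),
      fun v hv => ⟨h.mapsTo v hv, h.le_apply v hv⟩, h.apply_of_notMem,
      fun u hu hleaf => by simpa using h.mem_of_isLeaf u hu hleaf⟩,
    fun ⟨ha, hb, hmaps, hid, hleaf⟩ => ⟨subset_univ _, by simp [insert_subset_iff, ha, hb],
      fun v hv => (hmaps v hv).1, fun v hv => (hmaps v hv).2, hid,
      fun u hu hl => by simpa using hleaf u hu hl⟩⟩
  have hcount := rootGF_pair hab (mem_univ a) (mem_univ b) 1
  rw [← card_forests, filter_lt_lt_eq_Ioo, filter_lt_eq_Ioi, Fin.card_Ioo,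
    Fin.card_Ioi] at hcount
  rw [← Nat.card_congr (Equiv.subtypeEquivRight fun p => mem_forests.trans (hforest p)),
    Nat.card_eq_finsetCard]
  have hr : (b : ℕ) - a - 1 = r := by simp [a, b]
  have hs : r + s + 2 - 1 - b = s := by simp [b]
  zify
  rw [hcount, hr, hs]
  ring
end
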